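/- arXiv:1306.1803 — 7 statements merged into one kernel-verified Lean document; each statement's English description precedes it below -/
import Mathlib

section
/- Let n, r be natural numbers with r ≥ 1, and write n = a(r+1) + b with 0 ≤ b ≤ r. If G is a simple graph on n vertices with maximum degree Δ(G) ≤ r, then the number of cliques of G satisfies k(G) ≤ k(aK_{r+1} ∪ K_b) = a(2^{r+1} − 1) + 2^b. -/
open Classical Finset

namespace Paper

variable {V : Type*}

/-- The number of cliques (vertex sets inducing complete subgraphs, including
the empty set and singletons) of a graph. -/
noncomputable def cliqueCount [Fintype V] (G : SimpleGraph V) : ℕ :=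
  (Finset.univ.filter fun s : Finset V => G.IsClique (s : Set V)).card

/-- The number of cliques of size `t`. -/
noncomputable def cliqueCountSize [Fintype V] (G : SimpleGraph V) (t : ℕ) : ℕ :=
  (Finset.univ.filter fun s : Finset V => G.IsClique (s : Set V) ∧ s.card = t).card

/-- A finset of vertices is independent if its vertices are pairwise nonadjacent. -/
def IsIndepFinset (G : SimpleGraph V) (s : Finset V) : Prop :=
  (s : Set V).Pairwise fun u v => ¬ G.Adj u v

/-- The number of independent sets (including the empty set) of a graph. -/
noncomputable def indepCount [Fintype V] (G : SimpleGraph V) : ℕ :=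
  (Finset.univ.filter fun s : Finset V => IsIndepFinset G s).card

/-- The number of independent sets of size `t`. -/
noncomputable def indepCountSize [Fintype V] (G : SimpleGraph V) (t : ℕ) : ℕ :=
  (Finset.univ.filter fun s : Finset V => IsIndepFinset G s ∧ s.card = t).card

/-- `S_T`: the set of common neighbors of all vertices of `T`. -/
noncomputable def commonNbrs [Fintype V] (G : SimpleGraph V) (T : Finset V) : Finset V :=
  Finset.univ.filter fun v => ∀ x ∈ T, G.Adj x v

/-- The weight `w(C)` of a clique: the number of common neighbors of its vertices. -/
noncomputable def weight [Fintype V] (G : SimpleGraph V) (T : Finset V) : ℕ :=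
  (commonNbrs G T).card

/-- A clique `T` is tight (for max degree bound `r`) if `w(T) = r + 1 - |T|`. -/
def IsTight [Fintype V] (r : ℕ) (G : SimpleGraph V) (T : Finset V) : Prop :=
  G.IsClique (T : Set V) ∧ weight G T + T.card = r + 1

/-- A cluster is a maximal tight clique. -/
def IsCluster [Fintype V] (r : ℕ) (G : SimpleGraph V) (T : Finset V) : Prop :=
  IsTight r G T ∧ ∀ T' : Finset V, T ⊆ T' → IsTight r G T' → T' = T

/-- The graph `G_T`, obtained from `G` by adding all edges within `S_T` and deleting all
edges between `S_T` and `V(G) \ (T ∪ S_T)`. -/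
noncomputable def modGraph [Fintype V] (G : SimpleGraph V) (T : Finset V) : SimpleGraph V :=
  SimpleGraph.fromRel fun u v =>
    (u ∈ commonNbrs G T ∧ v ∈ commonNbrs G T) ∨
    (G.Adj u v ∧ ¬(u ∈ commonNbrs G T ∧ v ∉ T ∪ commonNbrs G T) ∧
      ¬(v ∈ commonNbrs G T ∧ u ∉ T ∪ commonNbrs G T))

/-- The graph `R_T`: the complement of the subgraph of `G` induced on `S_T`. -/
noncomputable def RT [Fintype V] (G : SimpleGraph V) (T : Finset V) :
    SimpleGraph ((commonNbrs G T : Finset V) : Set V) :=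
  (SimpleGraph.induce ((commonNbrs G T : Finset V) : Set V) G)ᶜ

/-- `δ_I`: the minimum degree in `R` over the vertices of `I`. -/
noncomputable def minDegOn {W : Type*} [Fintype W] (R : SimpleGraph W) (I : Finset W) : ℕ :=
  sInf ((fun x => R.degree x) '' (I : Set W))

/-- The fixed loss `φ(R) = Σ_{∅ ≠ I independent} (2 ^ δ_I - 1)`. -/
noncomputable def fixedLoss {W : Type*} [Fintype W] (R : SimpleGraph W) : ℕ :=
  ∑ I ∈ Finset.univ.filter (fun I : Finset W => I.Nonempty ∧ IsIndepFinset R I),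
    (2 ^ minDegOn R I - 1)

/-- The disjoint union of `a` copies of `K_{r+1}` together with one copy of `K_b`. -/
noncomputable def kUnion (a r b : ℕ) : SimpleGraph ((Fin a × Fin (r + 1)) ⊕ Fin b) :=
  SimpleGraph.fromRel fun x y =>
    match x, y with
    | Sum.inl (i, _), Sum.inl (j, _) => i = j
    | Sum.inr _, Sum.inr _ => True
    | _, _ => False

/-- The disjoint union of `a` copies of `K_3` together with one copy of the cycle `C_m`. -/
noncomputable def triCyc (a m : ℕ) : SimpleGraph ((Fin a × Fin 3) ⊕ Fin m) :=
  SimpleGraph.fromRel fun x y =>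
    match x, y with
    | Sum.inl (i, _), Sum.inl (j, _) => i = j
    | Sum.inr u, Sum.inr v => (u.val + 1) % m = v.val
    | _, _ => False

end Paper

open Paper

/-! Induction on `n`. By double counting, for some vertex `v` at most `2 ^ |N[v]| - 1` cliques
meet its closed neighbourhood `N[v]`; every other clique is a clique of `G - N[v]`, and
`f(n) = ⌊n / (r+1)⌋ (2 ^ (r+1) - 1) + 2 ^ (n mod (r+1))` satisfies `f(n - j) + 2 ^ j - 1 ≤ f(n)`
for `j ≤ r + 1`.

The double counting injects the pairs `(v, C)`, `C` a clique meeting `N[v]`, into the pairs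
`(w, S)` with `∅ ≠ S ⊆ N[w]`. A pair with `C ⊆ N[v]` is kept; otherwise it goes to
`(w, C ∪ {v})` for some `w ∈ C ∩ N(v)`, and `C ∪ {v}` is not a clique. Two such pairs collide
only as `(v, K ∪ {u})` and `(u, K ∪ {v})` with `u ≁ v`; the later of the two is sent to
`(w, K ∪ {u, v} \ {w})` instead, which is told apart from the other images by `w ∉ S`. -/

def cliqueBound (r n : ℕ) : ℕ := n / (r + 1) * (2 ^ (r + 1) - 1) + 2 ^ (n % (r + 1))

lemma cliqueBound_mul_add {r b : ℕ} (a : ℕ) (hb : b ≤ r) :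
    cliqueBound r (a * (r + 1) + b) = a * (2 ^ (r + 1) - 1) + 2 ^ b := by
  have hb' : b < r + 1 := Nat.lt_succ_of_le hb
  rw [cliqueBound, add_comm (a * (r + 1)), Nat.add_mul_div_right _ _ (Nat.succ_pos r),
    Nat.div_eq_of_lt hb', zero_add, Nat.add_mul_mod_self_right, Nat.mod_eq_of_lt hb']

lemma two_pow_add_two_pow_le (m x y : ℕ) :
    2 ^ (m + x) + 2 ^ (m + y) ≤ 2 ^ m + 2 ^ (m + x + y) := by
  have hx : 1 ≤ 2 ^ x := Nat.one_le_two_pow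
  have hy : 1 ≤ 2 ^ y := Nat.one_le_two_pow
  have key : 2 ^ x + 2 ^ y ≤ 1 + 2 ^ x * 2 ^ y := by nlinarith
  calc 2 ^ (m + x) + 2 ^ (m + y) = 2 ^ m * (2 ^ x + 2 ^ y) := by ring
    _ ≤ 2 ^ m * (1 + 2 ^ x * 2 ^ y) := Nat.mul_le_mul_left _ key
    _ = 2 ^ m + 2 ^ (m + x + y) := by ring

lemma cliqueBound_add_le {r j : ℕ} (m : ℕ) (hj : j ≤ r + 1) :
    cliqueBound r m + (2 ^ j - 1) ≤ cliqueBound r (m + j) := by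
  obtain ⟨q, s, hs, rfl⟩ : ∃ q s, s ≤ r ∧ m = q * (r + 1) + s :=
    ⟨m / (r + 1), m % (r + 1), Nat.le_of_lt_succ (Nat.mod_lt _ (Nat.succ_pos r)),
      (Nat.div_add_mod' m (r + 1)).symm⟩
  have hj1 : 1 ≤ 2 ^ j := Nat.one_le_two_pow
  rw [cliqueBound_mul_add q hs]
  rcases le_or_gt (s + j) r with hsj | hsj
  · rw [show q * (r + 1) + s + j = q * (r + 1) + (s + j) by ring, cliqueBound_mul_add q hsj]
    have := two_pow_add_two_pow_le 0 s j
    simp only [zero_add, pow_zero] at this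
    omega
  · -- the carry case: `m + j` passes the next multiple of `r + 1`
    obtain ⟨t, hst⟩ : ∃ t, s + j = t + (r + 1) := ⟨s + j - (r + 1), by omega⟩
    have ht : t ≤ r := by omega
    rw [show q * (r + 1) + s + j = (q + 1) * (r + 1) + t by rw [add_assoc, hst]; ring,
      cliqueBound_mul_add (q + 1) ht]
    obtain ⟨x, rfl⟩ : ∃ x, s = t + x := ⟨s - t, by omega⟩
    obtain ⟨y, rfl⟩ : ∃ y, j = t + y := ⟨j - t, by omega⟩
    have := two_pow_add_two_pow_le t x y
    rw [show t + x + y = r + 1 by omega] at this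
    have hr1 : 1 ≤ 2 ^ (r + 1) := Nat.one_le_two_pow
    rw [add_mul, one_mul]
    omega

namespace Finset

lemma card_filter_nonempty_subset {α : Type*} [Fintype α] (s : Finset α) :
    #{S : Finset α | S.Nonempty ∧ S ⊆ s} = 2 ^ #s - 1 := by
  rw [← card_powerset, ← card_erase_of_mem (empty_mem_powerset s)]
  congr 1
  ext S
  simp [nonempty_iff_ne_empty]

lemma card_filter_prod {α β : Type*} [Fintype α] [Fintype β] (P : α → β → Prop)
    [∀ a b, Decidable (P a b)] :
    #{p : α × β | P p.1 p.2} = ∑ a, #{b | P a b} := by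
  simp only [card_filter, Fintype.sum_prod_type]

end Finset

namespace SimpleGraph

variable {V : Type*} [Fintype V] (G : SimpleGraph V)

noncomputable def closedNbhd (v : V) : Finset V := insert v (G.neighborFinset v)

variable {G}

lemma mem_closedNbhd {v x : V} : x ∈ G.closedNbhd v ↔ x = v ∨ G.Adj v x := by
  simp [closedNbhd]

lemma self_mem_closedNbhd (v : V) : v ∈ G.closedNbhd v :=
  mem_insert_self v _

lemma card_closedNbhd (v : V) : #(G.closedNbhd v) = G.degree v + 1 :=
  card_insert_of_notMem (G.notMem_neighborFinset_self v)

lemma IsClique.subset_closedNbhd {C : Finset V} (hC : G.IsClique (C : Set V)) {v : V}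
    (hv : v ∈ C) : C ⊆ G.closedNbhd v := fun x hx =>
  mem_closedNbhd.2 <| (eq_or_ne x v).imp_right fun hxv => hC hv hx hxv.symm

lemma not_isClique_of_notMem_closedNbhd {S : Finset V} {v d : V} (hv : v ∈ S) (hd : d ∈ S)
    (hvd : d ∉ G.closedNbhd v) : ¬G.IsClique (S : Set V) := fun hS =>
  hvd (hS.subset_closedNbhd hv hd)

lemma sdiff_closedNbhd_subset_singleton {v₁ v₂ : V} {C₁ C₂ : Finset V}
    (hC₂ : G.IsClique (C₂ : Set V)) (hM : insert v₁ C₁ = insert v₂ C₂)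
    (hne : v₁ ≠ v₂) : C₁ \ G.closedNbhd v₁ ⊆ {v₂} := by
  intro d hd
  rw [mem_sdiff] at hd
  rw [mem_singleton]
  by_contra hdv₂
  have hdC₂ : d ∈ C₂ :=
    (mem_insert.1 (hM ▸ mem_insert_of_mem hd.1 : d ∈ insert v₂ C₂)).resolve_left hdv₂
  have hv₁C₂ : v₁ ∈ C₂ :=
    (mem_insert.1 (hM ▸ mem_insert_self v₁ C₁ : v₁ ∈ insert v₂ C₂)).resolve_left hne
  exact hd.2 (hC₂.subset_closedNbhd hv₁C₂ hdC₂)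

section Reroute

variable (G) (ord : V ↪ ℕ) (w : V → Finset V → V)

/-- Marks the later, in the order `ord`, of two colliding pairs `(v, K ∪ {u})`, `(u, K ∪ {v})`
with `u ≁ v`. -/
def Rerouted (v : V) (C : Finset V) : Prop :=
  ∃ u, C \ G.closedNbhd v = {u} ∧ ord u < ord v

noncomputable def rerouteMap (p : V × Finset V) : V × Finset V :=
  if p.2 ⊆ G.closedNbhd p.1 then p
  else if G.Rerouted ord p.1 p.2 then (w p.1 p.2, (insert p.1 p.2).erase (w p.1 p.2))
  else (w p.1 p.2, insert p.1 p.2)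

variable {G ord w}

lemma rerouted_iff_of_sdiff_eq {v u : V} {C : Finset V} (h : C \ G.closedNbhd v = {u}) :
    G.Rerouted ord v C ↔ ord u < ord v :=
  ⟨fun ⟨u', hu', hlt⟩ => by rwa [singleton_inj.1 (h.symm.trans hu')], fun hlt => ⟨u, h, hlt⟩⟩

lemma eq_of_insert_eq_of_rerouted_iff {v₁ v₂ : V} {C₁ C₂ : Finset V}
    (hC₁ : G.IsClique (C₁ : Set V)) (hC₂ : G.IsClique (C₂ : Set V))
    (h₁ : ¬C₁ ⊆ G.closedNbhd v₁) (h₂ : ¬C₂ ⊆ G.closedNbhd v₂)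
    (hM : insert v₁ C₁ = insert v₂ C₂) (hR : G.Rerouted ord v₁ C₁ ↔ G.Rerouted ord v₂ C₂) :
    v₁ = v₂ ∧ C₁ = C₂ := by
  have hv₁ : v₁ ∉ C₁ := fun hv => h₁ (hC₁.subset_closedNbhd hv)
  have hv₂ : v₂ ∉ C₂ := fun hv => h₂ (hC₂.subset_closedNbhd hv)
  by_cases hne : v₁ = v₂
  · subst hne
    exact ⟨rfl, by rw [← erase_insert hv₁, hM, erase_insert hv₂]⟩
  have hd₁ : C₁ \ G.closedNbhd v₁ = {v₂} :=
    (nonempty_of_ne_empty (by simpa using h₁)).subset_singleton_iff.1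
      (sdiff_closedNbhd_subset_singleton hC₂ hM hne)
  have hd₂ : C₂ \ G.closedNbhd v₂ = {v₁} :=
    (nonempty_of_ne_empty (by simpa using h₂)).subset_singleton_iff.1
      (sdiff_closedNbhd_subset_singleton hC₁ hM.symm (Ne.symm hne))
  rw [rerouted_iff_of_sdiff_eq hd₁, rerouted_iff_of_sdiff_eq hd₂] at hR
  have := ord.injective.ne hne
  omega

lemma rerouteMap_of_subset {v : V} {C : Finset V} (h : C ⊆ G.closedNbhd v) :
    G.rerouteMap ord w (v, C) = (v, C) :=
  if_pos h

lemma rerouteMap_of_not_subset {v : V} {C : Finset V} (h : ¬C ⊆ G.closedNbhd v) :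
    G.rerouteMap ord w (v, C) = (w v C,
      if G.Rerouted ord v C then (insert v C).erase (w v C) else insert v C) := by
  simp only [rerouteMap, if_neg h]
  split_ifs <;> rfl

lemma mem_rerouteMap_snd_iff {v : V} {C : Finset V} (h : ¬C ⊆ G.closedNbhd v)
    (hw : w v C ∈ C) : w v C ∈ (G.rerouteMap ord w (v, C)).2 ↔ ¬G.Rerouted ord v C := by
  rw [rerouteMap_of_not_subset h]
  split_ifs with hR <;> simp [hR, hw]

lemma insert_rerouteMap_snd {v : V} {C : Finset V} (h : ¬C ⊆ G.closedNbhd v) (hw : w v C ∈ C) :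
    insert (w v C) (G.rerouteMap ord w (v, C)).2 = insert v C := by
  rw [rerouteMap_of_not_subset h]
  split_ifs
  · exact insert_erase (mem_insert_of_mem hw)
  · exact insert_eq_of_mem (mem_insert_of_mem hw)

lemma rerouteMap_snd_subset {v : V} {C : Finset V} (hC : G.IsClique (C : Set V))
    (h : ¬C ⊆ G.closedNbhd v) (hw : w v C ∈ C ∩ G.closedNbhd v) :
    (G.rerouteMap ord w (v, C)).2 ⊆ G.closedNbhd (w v C) := by
  rw [mem_inter] at hw
  have hwv : w v C ≠ v := fun he => h (hC.subset_closedNbhd (he ▸ hw.1))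
  have hM : insert v C ⊆ G.closedNbhd (w v C) :=
    insert_subset (mem_closedNbhd.2 (Or.inr ((mem_closedNbhd.1 hw.2).resolve_left hwv).symm))
      (hC.subset_closedNbhd hw.1)
  rw [rerouteMap_of_not_subset h]
  split_ifs
  exacts [(erase_subset _ _).trans hM, hM]

lemma self_mem_rerouteMap_snd {v : V} {C : Finset V} (hC : G.IsClique (C : Set V))
    (h : ¬C ⊆ G.closedNbhd v) (hw : w v C ∈ C) : v ∈ (G.rerouteMap ord w (v, C)).2 := by
  have hwv : w v C ≠ v := fun he => h (hC.subset_closedNbhd (he ▸ hw))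
  rw [rerouteMap_of_not_subset h]
  split_ifs
  exacts [mem_erase.2 ⟨hwv.symm, mem_insert_self v C⟩, mem_insert_self v C]

lemma not_isClique_rerouteMap_snd {v : V} {C : Finset V} (hC : G.IsClique (C : Set V))
    (h : ¬C ⊆ G.closedNbhd v) (hw : w v C ∈ C ∩ G.closedNbhd v) :
    ¬G.IsClique ((G.rerouteMap ord w (v, C)).2 : Set V) := by
  rw [mem_inter] at hw
  obtain ⟨d, hdC, hd⟩ := not_subset.1 h
  refine not_isClique_of_notMem_closedNbhd (self_mem_rerouteMap_snd hC h hw.1) ?_ hd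
  have hdw : d ≠ w v C := fun he => hd (he ▸ hw.2)
  rw [rerouteMap_of_not_subset h]
  split_ifs
  exacts [mem_erase.2 ⟨hdw, mem_insert_of_mem hdC⟩, mem_insert_of_mem hdC]

variable (G) in
noncomputable def cliqueMeetingPairs : Finset (V × Finset V) :=
  {p | G.IsClique (p.2 : Set V) ∧ (p.2 ∩ G.closedNbhd p.1).Nonempty}

variable (G) in
noncomputable def nbhdSubsetPairs : Finset (V × Finset V) :=
  {p | p.2.Nonempty ∧ p.2 ⊆ G.closedNbhd p.1}

lemma mapsTo_rerouteMap
    (hw : ∀ v C, (C ∩ G.closedNbhd v).Nonempty → w v C ∈ C ∩ G.closedNbhd v) :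
    Set.MapsTo (G.rerouteMap ord w) G.cliqueMeetingPairs G.nbhdSubsetPairs := by
  rintro ⟨v, C⟩ hp
  simp only [cliqueMeetingPairs, nbhdSubsetPairs, mem_coe, mem_filter, mem_univ, true_and]
    at hp ⊢
  obtain ⟨hC, hmeet⟩ := hp
  by_cases h : C ⊆ G.closedNbhd v
  · rw [rerouteMap_of_subset h]
    exact ⟨hmeet.mono inter_subset_left, h⟩
  · exact ⟨⟨v, self_mem_rerouteMap_snd hC h (mem_inter.1 (hw v C hmeet)).1⟩,
      (rerouteMap_of_not_subset h).symm ▸ rerouteMap_snd_subset hC h (hw v C hmeet)⟩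

lemma injOn_rerouteMap
    (hw : ∀ v C, (C ∩ G.closedNbhd v).Nonempty → w v C ∈ C ∩ G.closedNbhd v) :
    Set.InjOn (G.rerouteMap ord w) G.cliqueMeetingPairs := by
  have hclique : ∀ {v : V} {C : Finset V}, G.IsClique (C : Set V) →
      (C ∩ G.closedNbhd v).Nonempty →
      (G.IsClique ((G.rerouteMap ord w (v, C)).2 : Set V) ↔ C ⊆ G.closedNbhd v) := by
    intro v C hC hmeet
    exact ⟨fun hS => by_contra fun h => not_isClique_rerouteMap_snd hC h (hw v C hmeet) hS,
      fun h => by rwa [rerouteMap_of_subset h]⟩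
  rintro ⟨v₁, C₁⟩ hp₁ ⟨v₂, C₂⟩ hp₂ heq
  simp only [cliqueMeetingPairs, mem_coe, mem_filter, mem_univ, true_and] at hp₁ hp₂
  obtain ⟨⟨hC₁, hmeet₁⟩, ⟨hC₂, hmeet₂⟩⟩ := And.intro hp₁ hp₂
  have hsub : C₁ ⊆ G.closedNbhd v₁ ↔ C₂ ⊆ G.closedNbhd v₂ := by
    rw [← hclique hC₁ hmeet₁, ← hclique hC₂ hmeet₂, heq]
  by_cases h₁ : C₁ ⊆ G.closedNbhd v₁
  · rwa [rerouteMap_of_subset h₁, rerouteMap_of_subset (hsub.1 h₁)] at heq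
  have h₂ : ¬C₂ ⊆ G.closedNbhd v₂ := hsub.not.1 h₁
  have hw₁ := mem_inter.1 (hw v₁ C₁ hmeet₁)
  have hw₂ := mem_inter.1 (hw v₂ C₂ hmeet₂)
  have hw : w v₁ C₁ = w v₂ C₂ := by
    simpa [rerouteMap_of_not_subset h₁, rerouteMap_of_not_subset h₂] using congrArg Prod.fst heq
  have hR : G.Rerouted ord v₁ C₁ ↔ G.Rerouted ord v₂ C₂ := by
    rw [← not_iff_not, ← mem_rerouteMap_snd_iff h₁ hw₁.1, ← mem_rerouteMap_snd_iff h₂ hw₂.1,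
      heq, hw]
  have hM : insert v₁ C₁ = insert v₂ C₂ := by
    rw [← insert_rerouteMap_snd h₁ hw₁.1, ← insert_rerouteMap_snd h₂ hw₂.1, heq, hw]
  obtain ⟨rfl, rfl⟩ := eq_of_insert_eq_of_rerouted_iff hC₁ hC₂ h₁ h₂ hM hR
  rfl

end Reroute

lemma sum_card_cliques_meeting_closedNbhd_le :
    ∑ v, #{C : Finset V | G.IsClique (C : Set V) ∧ (C ∩ G.closedNbhd v).Nonempty} ≤
      ∑ v, (2 ^ #(G.closedNbhd v) - 1) := by
  have hmeet : ∑ v, #{C : Finset V | G.IsClique (C : Set V) ∧ (C ∩ G.closedNbhd v).Nonempty} =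
      #G.cliqueMeetingPairs :=
    (card_filter_prod fun v (C : Finset V) =>
      G.IsClique (C : Set V) ∧ (C ∩ G.closedNbhd v).Nonempty).symm
  have hsub : ∑ v, (2 ^ #(G.closedNbhd v) - 1) = #G.nbhdSubsetPairs := by
    simp only [← card_filter_nonempty_subset]
    exact (card_filter_prod fun v (S : Finset V) => S.Nonempty ∧ S ⊆ G.closedNbhd v).symm
  have hw : ∀ v (C : Finset V), ∃ w, (C ∩ G.closedNbhd v).Nonempty → w ∈ C ∩ G.closedNbhd v :=
    fun v C => if h : (C ∩ G.closedNbhd v).Nonempty then ⟨h.choose, fun _ => h.choose_spec⟩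
      else ⟨v, fun h' => (h h').elim⟩
  choose w hw using hw
  let ord : V ↪ ℕ := (Fintype.equivFin V).toEmbedding.trans Fin.valEmbedding
  rw [hmeet, hsub]
  exact card_le_card_of_injOn _ (mapsTo_rerouteMap (ord := ord) hw) (injOn_rerouteMap hw)

lemma cliqueCount_le_add_cliqueCount_induce_compl (s : Finset V) :
    cliqueCount G ≤ #{C : Finset V | G.IsClique (C : Set V) ∧ (C ∩ s).Nonempty} +
      cliqueCount (G.induce (s : Set V)ᶜ) := by
  rw [cliqueCount, ← card_filter_add_card_filter_not (fun C : Finset V => (C ∩ s).Nonempty),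
    filter_filter, filter_filter]
  refine Nat.add_le_add_left (card_le_card_of_injOn (fun C => C.subtype (· ∈ (s : Set V)ᶜ))
    ?_ ?_) _
  · intro C hC
    simp only [mem_coe, mem_filter, mem_univ, true_and] at hC ⊢
    intro x hx y hy hxy
    exact hC.1 (mem_subtype.1 hx) (mem_subtype.1 hy) (Subtype.coe_injective.ne hxy)
  · have hcompl : ∀ C : Finset V, ¬(C ∩ s).Nonempty → ∀ x ∈ C, x ∈ (s : Set V)ᶜ :=
      fun C hC x hx hxs => hC ⟨x, mem_inter.2 ⟨hx, hxs⟩⟩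
    intro C₁ hC₁ C₂ hC₂ heq
    simp only [mem_coe, mem_filter, mem_univ, true_and] at hC₁ hC₂
    rw [← subtype_map_of_mem (hcompl C₁ hC₁.2), ← subtype_map_of_mem (hcompl C₂ hC₂.2)]
    exact congrArg _ heq

variable (G) in
theorem cliqueCount_le_cliqueBound {r : ℕ} (hG : G.maxDegree ≤ r) :
    cliqueCount G ≤ cliqueBound r (Fintype.card V) := by
  induction h : Fintype.card V using Nat.strong_induction_on generalizing V with
  | _ n ih =>
  rcases isEmpty_or_nonempty V with hV | hV
  · subst h
    calc cliqueCount G ≤ Fintype.card (Finset V) := card_le_univ _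
      _ = cliqueBound r (Fintype.card V) := by simp [cliqueBound]
  obtain ⟨v, -, hv⟩ := exists_le_of_sum_le univ_nonempty G.sum_card_cliques_meeting_closedNbhd_le
  set N := G.closedNbhd v
  have hN : #N ≤ r + 1 := by
    rw [card_closedNbhd]
    exact Nat.succ_le_succ ((G.degree_le_maxDegree v).trans hG)
  have hcard : Fintype.card ((N : Set V)ᶜ : Set V) + #N = n := by
    simp only [Fintype.card_compl_set, coe_sort_coe, Fintype.card_coe, ← h]
    exact Nat.sub_add_cancel (card_le_univ N)
  have hrest := ih _ (by have : 0 < #N := card_pos.2 ⟨v, self_mem_closedNbhd v⟩; omega)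
    (G.induce (N : Set V)ᶜ) ((Copy.induce G _).maxDegree_mono.trans hG) rfl
  calc cliqueCount G ≤ (2 ^ #N - 1) + cliqueCount (G.induce (N : Set V)ᶜ) :=
        (G.cliqueCount_le_add_cliqueCount_induce_compl N).trans (Nat.add_le_add_right hv _)
    _ ≤ cliqueBound r (Fintype.card ((N : Set V)ᶜ : Set V)) + (2 ^ #N - 1) := by omega
    _ ≤ cliqueBound r n := hcard ▸ cliqueBound_add_le _ hN

end SimpleGraph

lemma cliqueCount_eq_of_adj_iff {W ι : Type*} [Fintype W] [Fintype ι] {H : SimpleGraph W}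
    (f : W → ι) (hH : ∀ x y, H.Adj x y ↔ x ≠ y ∧ f x = f y) :
    cliqueCount H = ∑ i, (2 ^ #{x | f x = i} - 1) + 1 := by
  have hcliques : ({C | H.IsClique (C : Set W)} : Finset (Finset W)) =
      insert ∅ (univ.biUnion fun i => ({x | f x = i} : Finset W).powerset.erase ∅) := by
    ext C
    simp only [mem_filter, mem_univ, true_and, mem_insert, mem_biUnion, mem_erase, mem_powerset]
    constructor
    · intro hC
      rcases C.eq_empty_or_nonempty with hC₀ | ⟨x, hx⟩
      · exact Or.inl hC₀
      refine Or.inr ⟨f x, ne_empty_of_mem hx, fun y hy => mem_filter.2 ⟨mem_univ y, ?_⟩⟩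
      rcases eq_or_ne y x with rfl | hyx
      · rfl
      · exact ((hH y x).1 (hC hy hx hyx)).2
    · rintro (rfl | ⟨i, -, hC⟩)
      · simp
      · intro x hx y hy hxy
        exact (hH x y).2 ⟨hxy, ((mem_filter.1 (hC hx)).2).trans (mem_filter.1 (hC hy)).2.symm⟩
  have hdisj : Set.PairwiseDisjoint (univ : Finset ι)
      fun i => ({x | f x = i} : Finset W).powerset.erase ∅ := by
    intro i _ j _ hij
    refine disjoint_left.2 fun C hi hj => ?_
    simp only [mem_erase, mem_powerset] at hi hj
    obtain ⟨x, hx⟩ := nonempty_iff_ne_empty.2 hi.1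
    exact hij ((mem_filter.1 (hi.2 hx)).2.symm.trans (mem_filter.1 (hj.2 hx)).2)
  rw [cliqueCount, hcliques, card_insert_of_notMem (by simp), card_biUnion hdisj]
  simp only [card_erase_of_mem (empty_mem_powerset _), card_powerset]

lemma kUnion_adj_iff {a r b : ℕ} (x y : (Fin a × Fin (r + 1)) ⊕ Fin b) :
    (kUnion a r b).Adj x y ↔
      x ≠ y ∧ Sum.elim (fun p => some p.1) (fun _ => none) x =
        (Sum.elim (fun p => some p.1) (fun _ => none) y : Option (Fin a)) := by
  rcases x with ⟨i, p⟩ | u <;> rcases y with ⟨j, q⟩ | v <;> simp [kUnion, eq_comm]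

lemma cliqueCount_kUnion (a r b : ℕ) :
    cliqueCount (kUnion a r b) = a * (2 ^ (r + 1) - 1) + 2 ^ b := by
  rw [cliqueCount_eq_of_adj_iff _ kUnion_adj_iff, Fintype.sum_option]
  simp only [card_filter, Fintype.sum_sum_type, Fintype.sum_prod_type]
  simp [-sum_boole]
  have : 1 ≤ 2 ^ b := Nat.one_le_two_pow
  omega

theorem stmt0_general {V : Type*} [Fintype V] (n r a b : ℕ) (hb : b ≤ r)
    (hn : n = a * (r + 1) + b) (G : SimpleGraph V) (hcard : Fintype.card V = n)
    (hdeg : G.maxDegree ≤ r) :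
    cliqueCount G ≤ cliqueCount (kUnion a r b) ∧
      cliqueCount (kUnion a r b) = a * (2 ^ (r + 1) - 1) + 2 ^ b := by
  refine ⟨?_, cliqueCount_kUnion a r b⟩
  calc cliqueCount G ≤ cliqueBound r (Fintype.card V) := G.cliqueCount_le_cliqueBound hdeg
    _ = cliqueCount (kUnion a r b) := by
      rw [hcard, hn, cliqueBound_mul_add a hb, cliqueCount_kUnion]

/-- **Main Theorem (inequality).** If `n = a(r+1) + b` with `0 ≤ b ≤ r`, `r ≥ 1`, and `G` is a
graph on `n` vertices with `Δ(G) ≤ r`, then `k(G) ≤ k(aK_{r+1} ∪ K_b) = a(2^{r+1} - 1) + 2^b`. -/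
theorem stmt0 {V : Type*} [Fintype V] (n r a b : ℕ) (hr : 1 ≤ r) (hb : b ≤ r)
    (hn : n = a * (r + 1) + b) (G : SimpleGraph V) (hcard : Fintype.card V = n)
    (hdeg : G.maxDegree ≤ r) :
    cliqueCount G ≤ cliqueCount (kUnion a r b) ∧
      cliqueCount (kUnion a r b) = a * (2 ^ (r + 1) - 1) + 2 ^ b :=
  stmt0_general n r a b hb hn G hcard hdeg
end

section
/- Let G be a d-regular simple graph on n = a(d+1) vertices. Then for all 0 ≤ t ≤ n, the number of independent sets of G of size t satisfies i_t(G) ≥ (d+1)^t · binom(a, t). -/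
open Classical Finset

open Paper

/-! Double count the pairs `S ⊆ T` of independent sets with `|S| = t`, `|T| = t + 1`. A vertex
outside the closed neighbourhoods of `S` extends `S`, so each `S` lies in at least
`n - t(d+1)` such `T`, while each `T` contains at most `t + 1` such `S`. Hence
`(t+1) i_{t+1} ≥ (n - t(d+1)) i_t = (a-t)(d+1) i_t`, and induction on `t` with
`(t+1) binom(a, t+1) = (a-t) binom(a, t)` gives the bound. -/

namespace Paper

variable {V : Type*} {G : SimpleGraph V} {d : ℕ}

lemma isIndepFinset_insert {s : Finset V} {v : V} :
    IsIndepFinset G (insert v s) ↔ IsIndepFinset G s ∧ ∀ u ∈ s, ¬ G.Adj u v := by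
  simp only [IsIndepFinset, coe_insert, Set.pairwise_insert, mem_coe, G.adj_comm v, and_self]
  exact and_congr_right fun _ => forall₂_congr fun u _ =>
    ⟨fun h huv => h (G.ne_of_adj huv).symm huv, fun h _ => h⟩

lemma card_sub_mul_le_card_extensions [Fintype V] (hdeg : ∀ v, G.degree v ≤ d) {S : Finset V}
    (hS : IsIndepFinset G S) :
    Fintype.card V - #S * (d + 1) ≤ #{v | v ∉ S ∧ IsIndepFinset G (insert v S)} := by
  set N := S.biUnion fun u => insert u (G.neighborFinset u)
  have hN : #N ≤ #S * (d + 1) := card_biUnion_le_card_mul _ _ _ fun u _ =>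
    (card_insert_le _ _).trans (by simpa using hdeg u)
  have hsub : univ \ N ⊆ ({v | v ∉ S ∧ IsIndepFinset G (insert v S)} : Finset V) := by
    intro v hv
    simp only [N, mem_sdiff, mem_univ, mem_biUnion, mem_insert, SimpleGraph.mem_neighborFinset,
      true_and, not_exists, not_and, not_or] at hv
    simp only [mem_filter, mem_univ, true_and, isIndepFinset_insert]
    exact ⟨fun hvS => (hv v hvS).1 rfl, hS, fun u hu => (hv u hu).2⟩
  calc Fintype.card V - #S * (d + 1) ≤ #(univ \ N) := by
        rw [card_univ_sdiff]; omega
    _ ≤ _ := card_le_card hsub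

lemma indepCountSize_mul_le [Fintype V] (hdeg : ∀ v, G.degree v ≤ d) (t : ℕ) :
    indepCountSize G t * (Fintype.card V - t * (d + 1)) ≤ indepCountSize G (t + 1) * (t + 1) := by
  refine card_mul_le_card_mul (· ⊆ ·) (fun S hS => ?_) (fun T hT => ?_)
  · obtain ⟨hSind, rfl⟩ := (mem_filter.1 hS).2
    refine (card_sub_mul_le_card_extensions hdeg hSind).trans
      (card_le_card_of_injOn (insert · S) (fun v hv => ?_) (fun v hv w hw h => ?_))
    · simp only [coe_filter, Set.mem_ofPred_eq, mem_univ, true_and] at hv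
      simp [bipartiteAbove, hv.2, card_insert_of_notMem hv.1, subset_insert]
    · simp only [coe_filter, Set.mem_ofPred_eq, mem_univ, true_and] at hv
      exact (insert_inj hv.1).1 h
  · have hTcard := (mem_filter.1 hT).2.2
    calc #(bipartiteBelow _ _ T) ≤ #(T.powersetCard t) := card_le_card fun S hS => by
          simp only [bipartiteBelow, mem_filter, mem_univ, true_and] at hS
          exact mem_powersetCard.2 ⟨hS.2, hS.1.2⟩
      _ = t + 1 := by rw [card_powersetCard, hTcard, Nat.choose_succ_self_right]

theorem pow_mul_choose_le_indepCountSize [Fintype V] (hdeg : ∀ v, G.degree v ≤ d) {a : ℕ}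
    (hcard : a * (d + 1) ≤ Fintype.card V) (t : ℕ) :
    (d + 1) ^ t * a.choose t ≤ indepCountSize G t := by
  induction t with
  | zero =>
    rw [pow_zero, Nat.choose_zero_right, mul_one]
    exact card_pos.2 ⟨∅, mem_filter.2 ⟨mem_univ _, by simp [IsIndepFinset], card_empty⟩⟩
  | succ t ih =>
    refine Nat.le_of_mul_le_mul_right ?_ t.succ_pos
    calc (d + 1) ^ (t + 1) * a.choose (t + 1) * (t + 1)
        = (d + 1) ^ t * a.choose t * ((a - t) * (d + 1)) := by
          rw [mul_assoc, Nat.choose_succ_right_eq]; ring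
      _ ≤ indepCountSize G t * (Fintype.card V - t * (d + 1)) :=
          Nat.mul_le_mul ih (by rw [Nat.sub_mul]; omega)
      _ ≤ indepCountSize G (t + 1) * (t + 1) := indepCountSize_mul_le hdeg t

end Paper

theorem stmt4_general {V : Type*} [Fintype V] (n d a t : ℕ) (hn : n = a * (d + 1))
    (hcard : Fintype.card V = n) (G : SimpleGraph V) (hreg : G.IsRegularOfDegree d) :
    (d + 1) ^ t * Nat.choose a t ≤ indepCountSize G t :=
  pow_mul_choose_le_indepCountSize (fun v => (hreg v).le) (by rw [hcard, hn]) t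

/-- **Theorem 2.1 (refined form).** If `G` is `d`-regular on `n = a(d+1)` vertices, then for
all `0 ≤ t ≤ n`, `i_t(G) ≥ (d+1)^t * binom(a, t)`. -/
theorem stmt4 {V : Type*} [Fintype V] (n d a t : ℕ) (hn : n = a * (d + 1))
    (hcard : Fintype.card V = n) (G : SimpleGraph V) (hreg : G.IsRegularOfDegree d)
    (ht : t ≤ n) :
    (d + 1) ^ t * Nat.choose a t ≤ indepCountSize G t :=
  stmt4_general n d a t hn hcard G hreg
end

section
/- If G is a simple graph on n vertices with maximum degree Δ(G) ≤ d, then the number of independent sets of G satisfies i(G)^{d+1} ≥ (d+2)^n (equivalently, i(G)^{1/n} ≥ (d+2)^{1/(d+1)}). -/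
open Classical Finset

open Paper

/-!
Give a vertex of degree `d` the weight `h d = (d + 2) ^ (1 / (d + 1))`, the share of one vertex of
`K_{d+1}` in `i(K_{d+1}) = d + 2`. For every vertex set `A`, the number of independent subsets of `A`
is at least the product of the weights of the vertices of `A`, with degrees taken inside `A`.
Deleting a vertex `v` of maximum degree `k` gives `i(A) = i(A - v) + i(A - N[v])`, which reduces
the induction step to the star inequality `h k * ∏_{u ∈ N(v)} h (d u) ≤ ∏_{u ∈ N(v)} h (d u - 1) + 1`
for `1 ≤ d u ≤ k`. It is an equality when every `d u = k` (the clique `K_{k+1}`), and lowering the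
degrees one at a time from `k` preserves it; this exchange step rests on the discrete convexity
`(j + 3) w (j + 1) ≤ (j + 2) w j` of the gaps `w` of `log (m + 1) / m`, which follows from
Padé-type bounds on the logarithm. As `h` is decreasing, `i(G) ≥ h d ^ n` whenever `Δ(G) ≤ d`,
and `h d ^ (d + 1) = d + 2`.
-/

namespace Real

lemma log_one_add_inv_le {a : ℝ} (ha : 0 < a) :
    log (1 + a⁻¹) ≤ (2 * a + 1) / (2 * a * (a + 1)) := by
  have h := self_le_sinh_iff.2 (log_nonneg (by simp [ha.le] : (1 : ℝ) ≤ 1 + a⁻¹))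
  rw [sinh_log (by positivity)] at h
  convert h using 1
  field_simp
  ring

lemma two_div_le_log_one_add_inv {a : ℝ} (ha : 0 < a) :
    2 / (2 * a + 1) ≤ log (1 + a⁻¹) := by
  simpa [div_eq_mul_inv] using le_hasSum (hasSum_log_one_add_inv ha) 0 fun k _ => by positivity

lemma two_thirds_add_le_log {x : ℝ} (hx : 0 < x) : 2 / 3 + 2 * x / (x + 4) ≤ log (x + 2) :=
  calc 2 / 3 + 2 * x / (x + 4) = 2 / (2 * 1 + 1) + 2 / (2 * (2 / x) + 1) := by
        field_simp; ring
    _ ≤ log (1 + 1⁻¹) + log (1 + (2 / x)⁻¹) :=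
        add_le_add (two_div_le_log_one_add_inv one_pos) (two_div_le_log_one_add_inv (by positivity))
    _ = log (x + 2) := by
        rw [← log_mul (by norm_num) (by positivity)]; congr 1; field_simp; ring

lemma add_one_mul_exp_sub_one_le {c x y : ℝ} (hc : 0 ≤ c) (hxy : x ≤ c * y) :
    (c + 1) * (exp x - 1) ≤ c * (exp (x + y) - 1) := by
  have h1 : exp x * (1 + y) ≤ exp (x + y) := by
    rw [exp_add]; gcongr; linarith [add_one_le_exp y]
  have h2 : exp x * (1 - c * y) ≤ 1 := by
    rcases le_total (c * y) 1 with h | h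
    · calc exp x * (1 - c * y) ≤ exp (c * y) * exp (-(c * y)) := by
            gcongr; linarith [add_one_le_exp (-(c * y))]
        _ = 1 := by rw [← exp_add, add_neg_cancel, exp_zero]
    · nlinarith [exp_pos x]
  linarith [mul_le_mul_of_nonneg_left h1 hc]

end Real

open Real

namespace IndepSetBound

/-- `exp (cliqueRate m) = i(K_m) ^ (1 / m)` for `m ≥ 1`; the junk value at `m = 0` is `0`. -/
noncomputable def cliqueRate (m : ℕ) : ℝ := log (m + 1) / m

noncomputable def rateGap (m : ℕ) : ℝ := cliqueRate m - cliqueRate (m + 1)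

/-- `degWeight d = (d + 2) ^ (1 / (d + 1))`. -/
noncomputable abbrev degWeight (d : ℕ) : ℝ := exp (cliqueRate (d + 1))

lemma natCast_mul_cliqueRate (m : ℕ) : (m : ℝ) * cliqueRate m = log (m + 1) := by
  rcases eq_or_ne m 0 with rfl | hm
  · simp
  · rw [cliqueRate, mul_div_cancel₀ _ (Nat.cast_ne_zero.2 hm)]

lemma degWeight_pow (d : ℕ) : degWeight d ^ (d + 1) = d + 2 := by
  rw [degWeight, ← exp_nat_mul, natCast_mul_cliqueRate, Nat.cast_add_one, add_assoc,
    one_add_one_eq_two, exp_log (by positivity)]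

lemma degWeight_pred_pow (k : ℕ) : degWeight (k - 1) ^ k = k + 1 := by
  cases k with
  | zero => simp
  | succ k => rw [Nat.add_sub_cancel, degWeight_pow]; push_cast; ring

lemma degWeight_pred {d : ℕ} (hd : 1 ≤ d) : degWeight (d - 1) = degWeight d * exp (rateGap d) := by
  rw [degWeight, degWeight, rateGap, Nat.sub_add_cancel hd, ← exp_add, add_sub_cancel]

lemma cliqueRate_succ_le {m : ℕ} (hm : 1 ≤ m) : cliqueRate (m + 1) ≤ cliqueRate m := by
  have hstep : log ((m : ℝ) + 2) - log (m + 1) ≤ 1 / (m + 1) := by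
    rw [← log_div (by positivity) (by positivity)]
    convert log_le_sub_one_of_pos (show (0 : ℝ) < (m + 2) / (m + 1) by positivity) using 1
    field_simp; ring
  have hlog : 1 - ((m : ℝ) + 1)⁻¹ ≤ log (m + 1) := one_sub_inv_le_log_of_pos (by positivity)
  rw [cliqueRate, cliqueRate, div_le_div_iff₀ (by positivity) (by positivity)]
  push_cast
  rw [show (m : ℝ) + 1 + 1 = m + 2 by ring]
  have : (m : ℝ) * (1 / (m + 1)) = 1 - ((m : ℝ) + 1)⁻¹ := by field_simp; ring
  linarith [mul_le_mul_of_nonneg_left hstep (Nat.cast_nonneg (α := ℝ) m)]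

lemma rateGap_nonneg {m : ℕ} (hm : 1 ≤ m) : 0 ≤ rateGap m :=
  sub_nonneg.2 (cliqueRate_succ_le hm)

lemma cliqueRate_antitoneOn : AntitoneOn cliqueRate (Set.Ici 1) :=
  antitoneOn_nat_Ici_of_succ_le fun _ hm => cliqueRate_succ_le hm

lemma mul_rateGap_succ_le {j : ℕ} (hj : 1 ≤ j) :
    ((j : ℝ) + 3) * rateGap (j + 1) ≤ ((j : ℝ) + 2) * rateGap j := by
  have hJ : (1 : ℝ) ≤ j := by exact_mod_cast hj
  have hform : (j + 2) * rateGap j - (j + 3) * rateGap (j + 1) =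
      ((j + 4) * log (j + 2) - (j + 1) * (j + 2) ^ 2 * (log (j + 2) - log (j + 1)) +
        j * (j + 1) * (j + 3) * (log (j + 3) - log (j + 2))) / (j * (j + 1) * (j + 2)) := by
    simp only [rateGap, cliqueRate]
    push_cast
    rw [show (j : ℝ) + 1 + 1 + 1 = j + 3 by ring, show (j : ℝ) + 1 + 1 = j + 2 by ring]
    field_simp
    ring
  rw [← sub_nonneg, hform]
  apply div_nonneg _ (by positivity)
  set J : ℝ := (j : ℝ)
  set a := log (J + 1)
  set b := log (J + 2)
  set c := log (J + 3)
  have hab : 2 * (J + 1) * (J + 2) * (b - a) ≤ 2 * J + 3 := by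
    have h := log_one_add_inv_le (show 0 < J + 1 by positivity)
    rw [show 1 + (J + 1)⁻¹ = (J + 2) / (J + 1) by field_simp; ring,
      log_div (by positivity) (by positivity), le_div_iff₀ (by positivity)] at h
    linarith
  have hbc : 2 ≤ (2 * J + 5) * (c - b) := by
    have h := two_div_le_log_one_add_inv (show 0 < J + 2 by positivity)
    rw [show 1 + (J + 2)⁻¹ = (J + 3) / (J + 2) by field_simp; ring,
      log_div (by positivity) (by positivity), div_le_iff₀ (by positivity)] at h
    linarith
  have hb : 8 * J + 8 ≤ 3 * (J + 4) * b := by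
    have h := two_thirds_add_le_log (show 0 < J by positivity)
    rw [div_add_div _ _ (by norm_num) (by positivity), div_le_iff₀ (by positivity)] at h
    linarith
  -- what the three bounds leave over is `(8 J ^ 2 + 7 J - 10) / (6 (2 J + 5)) ≥ 0`
  nlinarith [mul_le_mul_of_nonneg_left hab (show 0 ≤ 3 * (2 * J + 5) * (J + 2) by positivity),
    mul_le_mul_of_nonneg_left hbc (show 0 ≤ 6 * J * (J + 1) * (J + 3) by positivity),
    mul_le_mul_of_nonneg_left hb (show 0 ≤ 2 * (2 * J + 5) by positivity)]

lemma rateGap_succ_le {j : ℕ} (hj : 1 ≤ j) : rateGap (j + 1) ≤ rateGap j := by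
  have h := mul_rateGap_succ_le hj
  have h0 := rateGap_nonneg (Nat.le_succ_of_le hj)
  nlinarith

lemma rateGap_antitoneOn : AntitoneOn rateGap (Set.Ici 1) :=
  antitoneOn_nat_Ici_of_succ_le fun _ hj => rateGap_succ_le hj

lemma cliqueRate_succ_sub_le {m k : ℕ} (hm : 1 ≤ m) (hmk : m ≤ k) :
    cliqueRate (m + 1) - cliqueRate (k + 1) ≤ (k + 1) * (rateGap m - rateGap k) := by
  induction k, hmk using Nat.le_induction with
  | base => simp
  | succ k hmk ih =>
    have hk : 1 ≤ k := hm.trans hmk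
    have hconv := mul_rateGap_succ_le hk
    have hanti := rateGap_antitoneOn hm hk hmk
    have hgap : rateGap (k + 1) = cliqueRate (k + 1) - cliqueRate (k + 1 + 1) := rfl
    push_cast
    linarith

lemma degWeight_antitone : Antitone degWeight := fun a b hab =>
  exp_le_exp.2 (cliqueRate_antitoneOn (Nat.le_add_left 1 a) (Nat.le_add_left 1 b) (by omega))

lemma exp_rateGap_pow_mul (k : ℕ) : exp (rateGap k) ^ k * (k + 2) = (k + 1) * degWeight k := by
  have hk : (k : ℝ) + 1 = exp (k * cliqueRate k) := by
    rw [natCast_mul_cliqueRate, exp_log (by positivity)]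
  rw [← degWeight_pow k, hk, degWeight, ← exp_nat_mul, ← exp_nat_mul, ← exp_add, ← exp_add,
    rateGap]
  congr 1
  push_cast
  ring

lemma degWeight_exchange {m k : ℕ} (hm : 1 ≤ m) (hmk : m ≤ k) :
    degWeight k * (degWeight m - degWeight k) ≤
      exp (rateGap k) ^ (k - 1) * (degWeight (m - 1) - degWeight (k - 1)) := by
  have hk : 1 ≤ k := hm.trans hmk
  set x := cliqueRate (m + 1) - cliqueRate (k + 1)
  set y := rateGap m - rateGap k
  have hcore : ((k : ℝ) + 1 + 1) * (exp x - 1) ≤ (k + 1) * (exp (x + y) - 1) :=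
    add_one_mul_exp_sub_one_le (by positivity) (cliqueRate_succ_sub_le hm hmk)
  have hm_eq : degWeight m = degWeight k * exp x := by
    rw [degWeight, degWeight, ← exp_add, add_sub_cancel]
  have hm_pred_eq : degWeight (m - 1) = degWeight (k - 1) * exp (x + y) := by
    rw [degWeight, degWeight, Nat.sub_add_cancel hm, Nat.sub_add_cancel hk, ← exp_add]
    congr 1
    simp only [x, y, rateGap]
    ring
  have hpow : exp (rateGap k) ^ (k - 1) * degWeight (k - 1) * (k + 2) =
      (k + 1) * degWeight k ^ 2 := by
    rw [degWeight_pred hk, mul_comm (degWeight k), ← mul_assoc, ← pow_succ,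
      Nat.sub_add_cancel hk, mul_right_comm, exp_rateGap_pow_mul]
    ring
  rw [hm_eq, hm_pred_eq, ← mul_le_mul_iff_of_pos_right (show (0 : ℝ) < k + 2 by positivity)]
  calc degWeight k * (degWeight k * exp x - degWeight k) * (k + 2)
      = degWeight k ^ 2 * ((k + 1 + 1) * (exp x - 1)) := by ring
    _ ≤ degWeight k ^ 2 * ((k + 1) * (exp (x + y) - 1)) := by gcongr
    _ = exp (rateGap k) ^ (k - 1) * (degWeight (k - 1) * exp (x + y) - degWeight (k - 1)) *
          (k + 2) := by linear_combination (1 - exp (x + y)) * hpow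

section Star

variable {ι : Type*} [DecidableEq ι] {k : ℕ} {s : Finset ι}

lemma degWeight_star_of_update {d : ι → ℕ} {a : ι} (hs : s.card = k)
    (hd : ∀ u ∈ s, 1 ≤ d u ∧ d u ≤ k) (ha : a ∈ s)
    (h : degWeight k * ∏ u ∈ s, degWeight (Function.update d a k u) ≤
      ∏ u ∈ s, degWeight (Function.update d a k u - 1) + 1) :
    degWeight k * ∏ u ∈ s, degWeight (d u) ≤ ∏ u ∈ s, degWeight (d u - 1) + 1 := by
  have hupd : ∀ f : ℕ → ℝ, ∏ u ∈ s, f (Function.update d a k u) =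
      f k * ∏ u ∈ s.erase a, f (d u) := fun f => by
    rw [← mul_prod_erase s _ ha, Function.update_self]
    congr 1
    exact prod_congr rfl fun u hu => by rw [Function.update_of_ne (ne_of_mem_erase hu)]
  rw [hupd degWeight, hupd (fun e => degWeight (e - 1))] at h
  rw [← mul_prod_erase s _ ha, ← mul_prod_erase s (fun u => degWeight (d u - 1)) ha]
  set A := ∏ u ∈ s.erase a, degWeight (d u - 1)
  set B := ∏ u ∈ s.erase a, degWeight (d u)
  obtain ⟨hm, hmk⟩ := hd a ha
  have hk : 1 ≤ k := hm.trans hmk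
  have hAB : B * exp (rateGap k) ^ (k - 1) ≤ A := by
    have hcard : (s.erase a).card = k - 1 := by rw [card_erase_of_mem ha, hs]
    rw [← hcard, ← prod_const, ← prod_mul_distrib]
    refine prod_le_prod (fun u _ => by positivity) fun u hu => ?_
    obtain ⟨hu1, huk⟩ := hd u (mem_of_mem_erase hu)
    rw [degWeight_pred hu1]
    gcongr
    exact rateGap_antitoneOn hu1 hk huk
  have hB : 0 ≤ B := prod_nonneg fun u _ => by positivity
  have hmono : degWeight (k - 1) ≤ degWeight (d a - 1) := degWeight_antitone (by omega)
  linarith [mul_le_mul_of_nonneg_left (degWeight_exchange hm hmk) hB,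
    mul_le_mul_of_nonneg_right hAB (sub_nonneg.2 hmono)]

theorem degWeight_star {d : ι → ℕ} (hs : s.card = k) (hd : ∀ u ∈ s, 1 ≤ d u ∧ d u ≤ k) :
    degWeight k * ∏ u ∈ s, degWeight (d u) ≤ ∏ u ∈ s, degWeight (d u - 1) + 1 := by
  suffices H : ∀ T ⊆ s, degWeight k * ∏ u ∈ s, degWeight (if u ∈ T then d u else k) ≤
      ∏ u ∈ s, degWeight ((if u ∈ T then d u else k) - 1) + 1 by
    convert H s subset_rfl using 3 <;> rename_i u hu <;> rw [if_pos hu]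
  intro T
  induction T using Finset.induction_on with
  | empty =>
    intro _
    simp only [notMem_empty, if_false, prod_const, hs]
    rw [← pow_succ', degWeight_pow, degWeight_pred_pow]
    linarith
  | insert a T haT ih =>
    intro hT
    have hupd : Function.update (fun u => if u ∈ insert a T then d u else k) a k =
        fun u => if u ∈ T then d u else k := by
      funext u
      by_cases hua : u = a <;> simp [hua, haT]
    refine degWeight_star_of_update hs (fun u hu => ?_) (hT (mem_insert_self a T)) ?_
    · split_ifs
      · exact hd u hu
      · exact ⟨hs ▸ card_pos.2 ⟨u, hu⟩, le_rfl⟩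
    · rw [hupd]
      exact ih ((subset_insert a T).trans hT)

end Star

section Graph

variable {V : Type*} (G : SimpleGraph V)

noncomputable def indepCountOn (A : Finset V) : ℕ :=
  #(A.powerset.filter (IsIndepFinset G))

noncomputable def degreeOn (A : Finset V) (u : V) : ℕ :=
  #(A.filter (G.Adj u))

lemma indepCountOn_univ [Fintype V] : indepCountOn G univ = indepCount G := by
  rw [indepCountOn, indepCount, powerset_univ]

lemma degreeOn_univ [Fintype V] (u : V) : degreeOn G univ u = G.degree u := by
  rw [degreeOn, ← G.card_neighborFinset_eq_degree, G.neighborFinset_eq_filter]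

lemma degreeOn_mono {A B : Finset V} (hAB : A ⊆ B) (u : V) : degreeOn G A u ≤ degreeOn G B u :=
  card_le_card (filter_subset_filter _ hAB)

lemma degreeOn_erase_of_adj {A : Finset V} {u v : V} (hv : v ∈ A) (huv : G.Adj u v) :
    degreeOn G (A.erase v) u = degreeOn G A u - 1 := by
  rw [degreeOn, degreeOn, filter_erase, card_erase_of_mem (mem_filter.2 ⟨hv, huv⟩)]

lemma indepCountOn_eq_add {A : Finset V} {v : V} (hv : v ∈ A) :
    indepCountOn G A =
      indepCountOn G (A.erase v) + indepCountOn G ((A.erase v).filter fun u => ¬ G.Adj v u) := by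
  rw [indepCountOn, ← card_filter_add_card_filter_not (fun s => v ∉ s)]
  congr 1
  · congr 1
    ext s
    simp only [mem_filter, mem_powerset, subset_erase]
    tauto
  · refine card_nbij' (fun s => s.erase v) (insert v) ?_ ?_ ?_ ?_
    · intro s hs
      simp only [mem_coe, mem_filter, mem_powerset, not_not] at hs ⊢
      obtain ⟨⟨hsA, hind⟩, hvs⟩ := hs
      refine ⟨fun u hu => mem_filter.2 ⟨erase_subset_erase v hsA hu, ?_⟩,
        Set.Pairwise.mono (coe_subset.2 (erase_subset v s)) hind⟩
      exact hind (mem_coe.2 hvs) (mem_coe.2 (mem_of_mem_erase hu)) (ne_of_mem_erase hu).symm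
    · intro t ht
      simp only [mem_coe, mem_filter, mem_powerset, not_not] at ht ⊢
      obtain ⟨htR, hind⟩ := ht
      have hnadj : ∀ u ∈ t, ¬ G.Adj v u := fun u hu => (mem_filter.1 (htR hu)).2
      refine ⟨⟨insert_subset hv fun u hu => mem_of_mem_erase (mem_filter.1 (htR hu)).1, ?_⟩,
        mem_insert_self v t⟩
      rw [IsIndepFinset, coe_insert]
      exact hind.insert fun u hu _ => ⟨hnadj u hu, fun h => hnadj u hu h.symm⟩
    · intro s hs
      simp only [mem_coe, mem_filter, not_not] at hs
      exact insert_erase hs.2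
    · intro t ht
      simp only [mem_coe, mem_filter, mem_powerset] at ht
      exact erase_insert fun hvt => by simpa using ht.1 hvt

theorem prod_degWeight_le_indepCountOn (A : Finset V) :
    ∏ u ∈ A, degWeight (degreeOn G A u) ≤ indepCountOn G A := by
  induction A using Finset.strongInduction with
  | H A ih =>
  rcases A.eq_empty_or_nonempty with rfl | hA
  · simp [indepCountOn, filter_singleton, IsIndepFinset]
  obtain ⟨v, hv, hmax⟩ := exists_max_image A (degreeOn G A) hA
  set B := A.erase v
  set N := B.filter (G.Adj v)
  set R := B.filter fun u => ¬ G.Adj v u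
  have hBA : B ⊂ A := erase_ssubset hv
  have hN : #N = degreeOn G A v := by
    rw [degreeOn, ← erase_eq_of_notMem (s := A.filter (G.Adj v)) (a := v) (by simp), ← filter_erase]
  have hNdeg : ∀ u ∈ N, 1 ≤ degreeOn G A u ∧ degreeOn G A u ≤ degreeOn G A v := by
    intro u hu
    obtain ⟨huB, hvu⟩ := mem_filter.1 hu
    exact ⟨card_pos.2 ⟨v, mem_filter.2 ⟨hv, hvu.symm⟩⟩, hmax u (mem_of_mem_erase huB)⟩
  have hsplit (f : V → ℝ) : ∏ u ∈ B, f u = (∏ u ∈ N, f u) * ∏ u ∈ R, f u :=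
    (prod_filter_mul_prod_filter_not B (G.Adj v) f).symm
  have hB : (∏ u ∈ N, degWeight (degreeOn G A u - 1)) * ∏ u ∈ R, degWeight (degreeOn G A u) ≤
      indepCountOn G B := by
    refine le_trans ?_ (ih B hBA)
    rw [hsplit]
    gcongr with u hu u
    · exact degWeight_antitone (degreeOn_erase_of_adj G hv (mem_filter.1 hu).2.symm).le
    · exact degWeight_antitone (degreeOn_mono G (erase_subset v A) u)
  have hR : ∏ u ∈ R, degWeight (degreeOn G A u) ≤ indepCountOn G R := by
    refine le_trans ?_ (ih R ((filter_subset _ _).trans_ssubset hBA))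
    gcongr with u
    exact degWeight_antitone (degreeOn_mono G ((filter_subset _ _).trans (erase_subset v A)) u)
  calc ∏ u ∈ A, degWeight (degreeOn G A u)
      = degWeight (degreeOn G A v) * (∏ u ∈ N, degWeight (degreeOn G A u)) *
          ∏ u ∈ R, degWeight (degreeOn G A u) := by
        rw [← mul_prod_erase A _ hv, hsplit, mul_assoc]
    _ ≤ (∏ u ∈ N, degWeight (degreeOn G A u - 1) + 1) * ∏ u ∈ R, degWeight (degreeOn G A u) := by
        gcongr
        exact degWeight_star hN hNdeg
    _ ≤ indepCountOn G B + indepCountOn G R := by linarith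
    _ = indepCountOn G A := by rw [indepCountOn_eq_add G hv]; push_cast; rfl

end Graph

end IndepSetBound

open IndepSetBound

/-- **Porism 2.4.** If `G` is a graph on `n` vertices with `Δ(G) ≤ d`, then
`i(G)^{d+1} ≥ (d+2)^n`, i.e. `i(G)^{1/n} ≥ (d+2)^{1/(d+1)}`. -/
theorem stmt7 {V : Type*} [Fintype V] (n d : ℕ) (hcard : Fintype.card V = n)
    (G : SimpleGraph V) (hdeg : G.maxDegree ≤ d) :
    (d + 2) ^ n ≤ indepCount G ^ (d + 1) := by
  have hweight : degWeight d ^ n ≤ indepCount G :=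
    calc degWeight d ^ n = ∏ _u : V, degWeight d := by rw [prod_const, card_univ, hcard]
      _ ≤ ∏ u : V, degWeight (degreeOn G univ u) :=
        prod_le_prod (fun _ _ => by positivity) fun u _ => degWeight_antitone <|
          (degreeOn_univ G u).trans_le ((G.degree_le_maxDegree u).trans hdeg)
      _ ≤ indepCount G := by
        rw [← indepCountOn_univ]; exact prod_degWeight_le_indepCountOn G univ
  have hreal : ((d : ℝ) + 2) ^ n ≤ (indepCount G : ℝ) ^ (d + 1) :=
    calc ((d : ℝ) + 2) ^ n = (degWeight d ^ n) ^ (d + 1) := by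
          rw [← pow_mul, mul_comm, pow_mul, degWeight_pow]
      _ ≤ (indepCount G : ℝ) ^ (d + 1) := by gcongr
  exact_mod_cast hreal
end

section
/- Let G be a simple graph on n = a(r+1) vertices with maximum degree Δ(G) ≤ r. Then for all 1 ≤ t ≤ n, the number of cliques of G of size t satisfies k_t(G) ≤ a · binom(r+1, t). -/
/-!
Double counting: a `t`-clique through a vertex `v` is `v` together with `t - 1` of its at most
`r` neighbours, so each vertex lies in at most `C(r, t-1)` cliques of size `t`. Summing over the
`a(r+1)` vertices counts every `t`-clique `t` times, whence
`t · k_t(G) ≤ a (r+1) C(r, t-1) = a t C(r+1, t)`.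
-/

open Classical Finset

open Paper

namespace SimpleGraph

variable {V : Type*} [Fintype V] [DecidableEq V] (G : SimpleGraph V) [DecidableRel G.Adj]

theorem card_filter_mem_cliqueFinset_le (v : V) (k : ℕ) :
    #{s ∈ G.cliqueFinset (k + 1) | v ∈ s} ≤ (G.degree v).choose k := by
  rw [← card_neighborFinset_eq_degree, ← card_powersetCard]
  refine card_le_card_of_injOn (·.erase v) (fun s hs ↦ ?_) fun s hs s' hs' h ↦ ?_
  · obtain ⟨hclique, hv⟩ := mem_filter.1 hs
    rw [mem_cliqueFinset_iff] at hclique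
    refine mem_powersetCard.2 ⟨fun u hu ↦ ?_, (hclique.erase_of_mem hv).card_eq⟩
    obtain ⟨huv, hu⟩ := mem_erase.1 hu
    exact (mem_neighborFinset _ _ _).2 (hclique.isClique hv hu huv.symm)
  · rw [← insert_erase (mem_filter.1 hs).2, ← insert_erase (mem_filter.1 hs').2]
    exact congrArg (insert v) h

theorem card_cliqueFinset_mul_le {r : ℕ} (hdeg : G.maxDegree ≤ r) (k : ℕ) :
    #(G.cliqueFinset (k + 1)) * (k + 1) ≤ Fintype.card V * r.choose k :=
  calc #(G.cliqueFinset (k + 1)) * (k + 1)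
      = ∑ s ∈ G.cliqueFinset (k + 1), #s := by
        rw [sum_congr rfl fun s hs ↦ (mem_cliqueFinset_iff.1 hs).card_eq, sum_const, smul_eq_mul]
    _ ≤ Fintype.card V * r.choose k := sum_card_le fun v ↦
        (G.card_filter_mem_cliqueFinset_le v k).trans
          (Nat.choose_le_choose k ((G.degree_le_maxDegree v).trans hdeg))

end SimpleGraph

theorem Paper.cliqueCountSize_eq_card_cliqueFinset {V : Type*} [Fintype V] (G : SimpleGraph V)
    (t : ℕ) : cliqueCountSize G t = #(G.cliqueFinset t) := by
  simp only [cliqueCountSize, SimpleGraph.cliqueFinset, SimpleGraph.isNClique_iff]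

theorem stmt8_general {V : Type*} [Fintype V] (n r a t : ℕ) (hn : n = a * (r + 1))
    (hcard : Fintype.card V = n) (G : SimpleGraph V) (hdeg : G.maxDegree ≤ r)
    (ht1 : 1 ≤ t) :
    cliqueCountSize G t ≤ a * Nat.choose (r + 1) t := by
  obtain ⟨k, rfl⟩ : ∃ k, t = k + 1 := ⟨t - 1, by omega⟩
  have hmul := G.card_cliqueFinset_mul_le hdeg k
  rw [hcard, hn, mul_assoc, Nat.add_one_mul_choose_eq, ← mul_assoc] at hmul
  rw [cliqueCountSize_eq_card_cliqueFinset]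
  exact Nat.le_of_mul_le_mul_right hmul k.succ_pos

/-- **Theorem 2.5 (refined form).** If `G` is a graph on `n = a(r+1)` vertices with
`Δ(G) ≤ r`, then for all `1 ≤ t ≤ n`, `k_t(G) ≤ a * binom(r+1, t)`. -/
theorem stmt8 {V : Type*} [Fintype V] (n r a t : ℕ) (hn : n = a * (r + 1))
    (hcard : Fintype.card V = n) (G : SimpleGraph V) (hdeg : G.maxDegree ≤ r)
    (ht1 : 1 ≤ t) (ht2 : t ≤ n) :
    cliqueCountSize G t ≤ a * Nat.choose (r + 1) t :=
  stmt8_general n r a t hn hcard G hdeg ht1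
end

section
/- Let G be a simple graph on n = a(r+1) vertices with maximum degree Δ(G) ≤ r. Then the number of cliques of G satisfies k(G) ≤ 1 + a(2^{r+1} − 1). -/
open Classical Finset

open Paper

lemma aux_sum (d : ℕ) :
    ∑ k ∈ range (d+1), (d.choose k : ℚ) * (1/(k+1)) = (2^(d+1) - 1)/(d+1) := by
  have hd : ((d:ℚ)+1) ≠ 0 := by positivity
  rw [eq_div_iff hd, Finset.sum_mul]
  have h1 : ∀ k ∈ range (d+1), (d.choose k : ℚ) * (1/(k+1)) * ((d:ℚ)+1)
      = ((d+1).choose (k+1) : ℚ) := by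
    intro k _
    have := Nat.add_one_mul_choose_eq d k
    have h2 : ((d+1) * d.choose k : ℚ) = ((d+1).choose (k+1) * (k+1) : ℚ) := by
      exact_mod_cast congrArg (Nat.cast : ℕ → ℚ) this
    field_simp
    linarith [h2]
  rw [Finset.sum_congr rfl h1]
  have h3 : ∑ k ∈ range (d+1), ((d+1).choose (k+1) : ℚ)
      = ∑ m ∈ range (d+2), ((d+1).choose m : ℚ) - 1 := by
    rw [Finset.sum_range_succ' (fun m => ((d+1).choose m : ℚ)) (d+1)]
    simp
  rw [h3]
  have h4 : ∑ m ∈ range (d+2), ((d+1).choose m : ℚ) = 2^(d+1) := by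
    exact_mod_cast congrArg (Nat.cast : ℕ → ℚ) (Nat.sum_range_choose (d+1))
  rw [h4]

lemma aux_mono {d r : ℕ} (h : d ≤ r) :
    ((2:ℚ)^(d+1) - 1)/(d+1) ≤ ((2:ℚ)^(r+1) - 1)/(r+1) := by
  induction r, h using Nat.le_induction with
  | base => exact le_refl _
  | succ r hdr ih =>
    refine le_trans ih ?_
    rw [div_le_div_iff₀ (by positivity) (by positivity)]
    push_cast
    have h1 : (1:ℚ) ≤ 2^(r+1) := one_le_pow₀ (by norm_num)
    ring_nf
    nlinarith [h1, mul_nonneg (Nat.cast_nonneg r : (0:ℚ) ≤ r) (pow_nonneg (by norm_num : (0:ℚ) ≤ 2) r)]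

lemma vertex_bound {V : Type*} [Fintype V] (G : SimpleGraph V) (r : ℕ)
    (hdeg : G.maxDegree ≤ r) (v : V) :
    ∑ s ∈ (Finset.univ.filter fun s : Finset V => G.IsClique (s : Set V) ∧ s.Nonempty).filter
        (fun s => v ∈ s), (1/(s.card : ℚ)) ≤ ((2:ℚ)^(r+1) - 1)/(r+1) := by
  classical
  set A := (Finset.univ.filter fun s : Finset V => G.IsClique (s : Set V) ∧ s.Nonempty).filter
        (fun s => v ∈ s) with hA
  have hmem : ∀ s ∈ A, G.IsClique (s : Set V) ∧ v ∈ s := by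
    intro s hs
    simp only [hA, Finset.mem_filter, Finset.mem_univ, true_and] at hs
    exact ⟨hs.1.1, hs.2⟩
  set d := G.degree v with hdv
  have hd : d ≤ r := le_trans (G.degree_le_maxDegree v) hdeg
  have step1 : ∑ s ∈ A, (1/(s.card : ℚ))
      = ∑ s ∈ A, (1/(((s.erase v).card : ℚ)+1)) := by
    refine Finset.sum_congr rfl fun s hs => ?_
    have hv := (hmem s hs).2
    have : (s.erase v).card + 1 = s.card := by
      rw [Finset.card_erase_of_mem hv]
      have := Finset.card_pos.2 ⟨v, hv⟩
      omega
    rw [← this]; push_cast; ring_nf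
  have hinj : Set.InjOn (fun s : Finset V => s.erase v) ↑A := by
    intro s hs t ht h
    have hv1 := (hmem s hs).2
    have hv2 := (hmem t ht).2
    simp only at h
    rw [← Finset.insert_erase hv1, ← Finset.insert_erase hv2, h]
  have step2 : ∑ s ∈ A, (1/(((s.erase v).card : ℚ)+1))
      = ∑ T ∈ A.image (fun s => s.erase v), (1/((T.card : ℚ)+1)) := by
    rw [Finset.sum_image (fun s hs t ht h => hinj hs ht h)]
  have hsub : A.image (fun s => s.erase v) ⊆ (G.neighborFinset v).powerset := by
    intro T hT
    rw [Finset.mem_image] at hT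
    obtain ⟨s, hs, rfl⟩ := hT
    rw [Finset.mem_powerset]
    intro u hu
    rw [Finset.mem_erase] at hu
    rw [SimpleGraph.mem_neighborFinset]
    exact (hmem s hs).1 (by simpa using (hmem s hs).2) (by simpa using hu.2) (Ne.symm hu.1)
  have step3 : ∑ T ∈ A.image (fun s => s.erase v), (1/((T.card : ℚ)+1))
      ≤ ∑ T ∈ (G.neighborFinset v).powerset, (1/((T.card : ℚ)+1)) := by
    refine Finset.sum_le_sum_of_subset_of_nonneg hsub fun T _ _ => by positivity
  have step4 : ∑ T ∈ (G.neighborFinset v).powerset, (1/((T.card : ℚ)+1))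
      = ∑ k ∈ range (d+1), (d.choose k : ℚ) * (1/(k+1)) := by
    rw [Finset.sum_powerset_apply_card (fun k => (1/((k : ℚ)+1)))]
    rw [G.card_neighborFinset_eq_degree v, ← hdv]
    refine Finset.sum_congr rfl fun k _ => ?_
    rw [nsmul_eq_mul]
  calc ∑ s ∈ A, (1/(s.card : ℚ))
      = ∑ T ∈ A.image (fun s => s.erase v), (1/((T.card : ℚ)+1)) := by rw [step1, step2]
    _ ≤ ∑ T ∈ (G.neighborFinset v).powerset, (1/((T.card : ℚ)+1)) := step3
    _ = ∑ k ∈ range (d+1), (d.choose k : ℚ) * (1/(k+1)) := step4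
    _ = ((2:ℚ)^(d+1) - 1)/(d+1) := aux_sum d
    _ ≤ ((2:ℚ)^(r+1) - 1)/(r+1) := aux_mono hd

/-- **Theorem 2.5.** If `G` is a graph on `n = a(r+1)` vertices with `Δ(G) ≤ r`, then
`k(G) ≤ k(aK_{r+1}) = 1 + a(2^{r+1} - 1)`. -/
theorem stmt9 {V : Type*} [Fintype V] (n r a : ℕ) (hn : n = a * (r + 1))
    (hcard : Fintype.card V = n) (G : SimpleGraph V) (hdeg : G.maxDegree ≤ r) :
    cliqueCount G ≤ 1 + a * (2 ^ (r + 1) - 1) := by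
  classical
  set K := Finset.univ.filter fun s : Finset V => G.IsClique (s : Set V) ∧ s.Nonempty with hK
  have hsplit : cliqueCount G = K.card + 1 := by
    have hset : (Finset.univ.filter fun s : Finset V => G.IsClique (s : Set V))
        = insert ∅ K := by
      ext s
      simp only [hK, Finset.mem_insert, Finset.mem_filter, Finset.mem_univ, true_and]
      constructor
      · intro h
        rcases s.eq_empty_or_nonempty with rfl | hne
        · exact Or.inl rfl
        · exact Or.inr ⟨h, hne⟩
      · rintro (rfl | ⟨h, _⟩)
        · simpa using G.isClique_empty
        · exact h
    have hne : (∅ : Finset V) ∉ K := by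
      simp [hK]
    rw [cliqueCount, hset, Finset.card_insert_of_notMem hne]
  have key : (K.card : ℚ) ≤ (a : ℚ) * ((2:ℚ)^(r+1) - 1) := by
    have h1 : (K.card : ℚ) = ∑ s ∈ K, ∑ _v ∈ s, (1 / (s.card:ℚ)) := by
      rw [Finset.card_eq_sum_ones]
      push_cast
      refine Finset.sum_congr rfl fun s hs => ?_
      have hsne : s.Nonempty := by
        simp only [hK, Finset.mem_filter, Finset.mem_univ, true_and] at hs
        exact hs.2
      have hc : (s.card : ℚ) ≠ 0 := by
        exact_mod_cast (Finset.card_pos.2 hsne).ne'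
      rw [Finset.sum_const, nsmul_eq_mul]
      field_simp
    have h2 : ∑ s ∈ K, ∑ _v ∈ s, (1 / (s.card:ℚ))
        = ∑ v : V, ∑ s ∈ K.filter (fun s => v ∈ s), (1 / (s.card:ℚ)) := by
      calc ∑ s ∈ K, ∑ _v ∈ s, (1 / (s.card:ℚ))
          = ∑ s ∈ K, ∑ v : V, (if v ∈ s then 1 / (s.card:ℚ) else 0) := by
            refine Finset.sum_congr rfl fun s _ => ?_
            rw [Finset.sum_ite_mem, Finset.univ_inter]
        _ = ∑ v : V, ∑ s ∈ K, (if v ∈ s then 1 / (s.card:ℚ) else 0) := Finset.sum_comm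
        _ = _ := by
            refine Finset.sum_congr rfl fun v _ => ?_
            exact (Finset.sum_filter _ _).symm
    rw [h1, h2]
    have h3 : ∑ v : V, ∑ s ∈ K.filter (fun s => v ∈ s), (1 / (s.card:ℚ))
        ≤ ∑ _v : V, ((2:ℚ)^(r+1) - 1)/(r+1) := by
      refine Finset.sum_le_sum fun v _ => ?_
      exact vertex_bound G r hdeg v
    refine le_trans h3 ?_
    rw [Finset.sum_const, Finset.card_univ, hcard, hn, nsmul_eq_mul]
    have hr : ((r:ℚ)+1) ≠ 0 := by positivity
    push_cast
    apply le_of_eq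
    field_simp
  have hnat : K.card ≤ a * (2 ^ (r + 1) - 1) := by
    have hc : ((a * (2 ^ (r + 1) - 1) : ℕ) : ℚ) = (a : ℚ) * ((2:ℚ)^(r+1) - 1) := by
      have h2 : (1:ℕ) ≤ 2^(r+1) := Nat.one_le_two_pow
      push_cast [h2]
      ring
    exact_mod_cast key.trans_eq hc.symm
  omega
end

section
/- Let G be a simple graph with maximum degree Δ(G) ≤ r and let T be a tight clique of G of size t. Then k(G_T) ≥ k(G) + 2^{r+1} − 2^t · i(R_T) − φ(R_T), where the inequality is between integers. -/
open Classical Finset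

open Paper

/-! The cliques of `G_T` are the subsets of the `(r+1)`-clique `T ∪ S_T` together with the cliques
of `G` avoiding `S_T`. A clique of `G` meeting `S_T` is determined by its trace `I` on `S_T`, a
nonempty independent set of `R_T`, and by its part outside `S_T`. Since `Δ(G) ≤ r` and `T` is
tight, vertices of `T` have no neighbours outside `T ∪ S_T`, so that part lies either in `T` or
among the neighbours outside `T ∪ S_T` of a vertex `x ∈ I` of minimum `R_T`-degree; there are at
most `δ_I` of those, because `x` has `|T|` neighbours in `T` and `|S_T| - 1 - deg_{R_T} x` in
`S_T`. This leaves at most `2^t + 2^{δ_I} - 1` cliques per `I`, and summing over `I` gives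
`2^t (i(R_T) - 1) + φ(R_T)`. -/

open SimpleGraph

namespace Paper

section General

variable {α W : Type*}

lemma card_powerset_union_powerset_add_one_le [DecidableEq α] (s t : Finset α) :
    (s.powerset ∪ t.powerset).card + 1 ≤ 2 ^ s.card + 2 ^ t.card := by
  have hinter : 1 ≤ (s.powerset ∩ t.powerset).card :=
    card_pos.2 ⟨∅, mem_inter.2 ⟨empty_mem_powerset s, empty_mem_powerset t⟩⟩
  have := card_union_add_card_inter s.powerset t.powerset
  rw [card_powerset, card_powerset] at this
  omega

lemma eq_of_subtype_eq_of_sdiff_eq {S C C' : Finset α}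
    (hS : C.subtype (· ∈ (S : Set α)) = C'.subtype (· ∈ (S : Set α))) (hV : C \ S = C' \ S) :
    C = C' := by
  ext v
  by_cases hv : v ∈ S
  · simpa using congrArg (⟨v, hv⟩ ∈ ·) hS
  · simpa [hv] using congrArg (v ∈ ·) hV

variable [Fintype W]

lemma exists_mem_degree_eq_minDegOn (R : SimpleGraph W) {I : Finset W} (hI : I.Nonempty) :
    ∃ x ∈ I, R.degree x = minDegOn R I :=
  Nat.sInf_mem ((coe_nonempty.2 hI).image _)

lemma indepCount_eq_card_nonempty_add_one (R : SimpleGraph W) :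
    indepCount R = (univ.filter fun I : Finset W => I.Nonempty ∧ IsIndepFinset R I).card + 1 := by
  have hsplit : univ.filter (IsIndepFinset R) =
      insert ∅ (univ.filter fun I : Finset W => I.Nonempty ∧ IsIndepFinset R I) := by
    ext I
    rcases I.eq_empty_or_nonempty with rfl | hI
    · simp [IsIndepFinset]
    · simp [hI, hI.ne_empty]
  rw [indepCount, hsplit, card_insert_of_notMem (by simp)]

end General

variable {V : Type*} [Fintype V] {G : SimpleGraph V} {T : Finset V} {r : ℕ}

lemma mem_commonNbrs {v : V} : v ∈ commonNbrs G T ↔ ∀ x ∈ T, G.Adj x v := by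
  simp [commonNbrs]

lemma disjoint_commonNbrs : Disjoint T (commonNbrs G T) :=
  disjoint_left.2 fun v hvT hvS => G.irrefl (mem_commonNbrs.1 hvS v hvT)

lemma RT_adj {a b : ((commonNbrs G T : Finset V) : Set V)} :
    (RT G T).Adj a b ↔ a ≠ b ∧ ¬ G.Adj a b :=
  Iff.rfl

lemma degree_RT {x : V} (hx : x ∈ commonNbrs G T) :
    (RT G T).degree ⟨x, hx⟩ =
      (commonNbrs G T).card - 1 - (G.neighborFinset x ∩ commonNbrs G T).card := by
  rw [RT, degree_compl, ← card_neighborFinset_eq_degree, ← card_map (Function.Embedding.subtype _)]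
  congr 2
  · simp
  · ext
    simp

lemma IsTight.card_union_commonNbrs (hT : IsTight r G T) :
    (T ∪ commonNbrs G T).card = r + 1 := by
  rw [card_union_of_disjoint disjoint_commonNbrs, add_comm]
  exact hT.2

lemma IsTight.not_adj_of_notMem_union (hdeg : G.maxDegree ≤ r) (hT : IsTight r G T) {v y : V}
    (hv : v ∈ T) (hy : y ∉ T ∪ commonNbrs G T) : ¬ G.Adj v y := by
  intro hvy
  have hsub : insert y ((T ∪ commonNbrs G T).erase v) ⊆ G.neighborFinset v := by
    intro z hz
    rw [mem_neighborFinset]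
    rcases mem_insert.1 hz with rfl | hz
    · exact hvy
    obtain ⟨hzv, hz⟩ := mem_erase.1 hz
    rcases mem_union.1 hz with hzT | hzS
    · exact hT.1 hv hzT hzv.symm
    · exact mem_commonNbrs.1 hzS v hv
  have hcard := card_le_card hsub
  rw [card_insert_of_notMem (fun h => hy (mem_of_mem_erase h)),
    card_erase_of_mem (mem_union_left _ hv), hT.card_union_commonNbrs,
    card_neighborFinset_eq_degree] at hcard
  have := (G.degree_le_maxDegree v).trans hdeg
  omega

lemma IsTight.card_neighborFinset_sdiff_le_degree_RT (hdeg : G.maxDegree ≤ r)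
    (hT : IsTight r G T) {x : V} (hx : x ∈ commonNbrs G T) :
    (G.neighborFinset x \ (T ∪ commonNbrs G T)).card ≤ (RT G T).degree ⟨x, hx⟩ := by
  have hsub : (T ∪ G.neighborFinset x ∩ commonNbrs G T) ∪
      (G.neighborFinset x \ (T ∪ commonNbrs G T)) ⊆ G.neighborFinset x := by
    refine union_subset (union_subset (fun z hz => ?_) inter_subset_left) sdiff_subset
    exact (mem_neighborFinset _ _ _).2 (mem_commonNbrs.1 hx z hz).symm
  have hdisj : Disjoint (T ∪ G.neighborFinset x ∩ commonNbrs G T)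
      (G.neighborFinset x \ (T ∪ commonNbrs G T)) :=
    disjoint_sdiff.mono_left (union_subset_union_right inter_subset_right)
  have hcard := card_le_card hsub
  rw [card_union_of_disjoint hdisj,
    card_union_of_disjoint (disjoint_commonNbrs.mono_right inter_subset_right),
    card_neighborFinset_eq_degree] at hcard
  have := (G.degree_le_maxDegree x).trans hdeg
  have := hT.card_union_commonNbrs
  rw [card_union_of_disjoint disjoint_commonNbrs] at this
  rw [degree_RT]
  omega

lemma modGraph_adj_of_mem_union (hT : G.IsClique (T : Set V)) {u v : V}
    (hu : u ∈ T ∪ commonNbrs G T) (hv : v ∈ T ∪ commonNbrs G T) (huv : u ≠ v) :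
    (modGraph G T).Adj u v := by
  have hTS := disjoint_left.1 (disjoint_commonNbrs (G := G) (T := T))
  refine (fromRel_adj _ _ _).2 ⟨huv, Or.inl ?_⟩
  rcases mem_union.1 hu with huT | huS <;> rcases mem_union.1 hv with hvT | hvS
  · exact Or.inr ⟨hT huT hvT huv, fun h => hTS huT h.1, fun h => hTS hvT h.1⟩
  · exact Or.inr ⟨mem_commonNbrs.1 hvS u huT, fun h => hTS huT h.1, fun h => h.2 hu⟩
  · exact Or.inr ⟨(mem_commonNbrs.1 huS v hvT).symm, fun h => h.2 hv, fun h => hTS hvT h.1⟩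
  · exact Or.inl ⟨huS, hvS⟩

lemma modGraph_adj_iff_of_notMem {u v : V} (hu : u ∉ commonNbrs G T) (hv : v ∉ commonNbrs G T) :
    (modGraph G T).Adj u v ↔ G.Adj u v := by
  simp [modGraph, hu, hv, G.adj_comm v u, and_iff_right_of_imp G.ne_of_adj]

lemma not_modGraph_adj_of_mem_of_notMem {u v : V} (hu : u ∈ commonNbrs G T)
    (hv : v ∉ T ∪ commonNbrs G T) : ¬ (modGraph G T).Adj u v := by
  simp only [mem_union, not_or] at hv
  simp [modGraph, hu, hv]

lemma modGraph_isClique_iff (hT : G.IsClique (T : Set V)) {C : Finset V} :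
    (modGraph G T).IsClique (C : Set V) ↔
      C ⊆ T ∪ commonNbrs G T ∨ (G.IsClique (C : Set V) ∧ Disjoint C (commonNbrs G T)) := by
  constructor
  · intro hC
    refine or_iff_not_imp_left.2 fun hsub => ?_
    obtain ⟨y, hyC, hyTS⟩ := not_subset.1 hsub
    have hdisj : Disjoint C (commonNbrs G T) := disjoint_left.2 fun u huC huS =>
      not_modGraph_adj_of_mem_of_notMem huS hyTS
        (hC huC hyC (by rintro rfl; exact hyTS (mem_union_right _ huS)))
    refine ⟨fun u hu v hv huv => ?_, hdisj⟩
    exact (modGraph_adj_iff_of_notMem (disjoint_left.1 hdisj hu) (disjoint_left.1 hdisj hv)).1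
      (hC hu hv huv)
  · rintro (hsub | ⟨hC, hdisj⟩) u hu v hv huv
    · exact modGraph_adj_of_mem_union hT (hsub hu) (hsub hv) huv
    · exact (modGraph_adj_iff_of_notMem (disjoint_left.1 hdisj hu) (disjoint_left.1 hdisj hv)).2
        (hC hu hv huv)

lemma cliqueCount_eq_card_disjoint_add_card_not_disjoint (G : SimpleGraph V) (S : Finset V) :
    cliqueCount G =
      (univ.filter fun C : Finset V => G.IsClique (C : Set V) ∧ Disjoint C S).card +
      (univ.filter fun C : Finset V => G.IsClique (C : Set V) ∧ ¬ Disjoint C S).card := by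
  rw [cliqueCount, ← card_filter_add_card_filter_not (fun C : Finset V => Disjoint C S),
    filter_filter, filter_filter]

lemma IsTight.cliqueCount_modGraph_add (hT : IsTight r G T) :
    cliqueCount (modGraph G T) + 2 ^ T.card = 2 ^ (r + 1) +
      (univ.filter fun C : Finset V =>
        G.IsClique (C : Set V) ∧ Disjoint C (commonNbrs G T)).card := by
  have hcliques : (univ.filter fun C : Finset V => (modGraph G T).IsClique (C : Set V)) =
      (T ∪ commonNbrs G T).powerset ∪
        univ.filter fun C : Finset V => G.IsClique (C : Set V) ∧ Disjoint C (commonNbrs G T) := by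
    ext C
    simp only [mem_filter, mem_univ, true_and, mem_union, mem_powerset]
    exact modGraph_isClique_iff hT.1
  have hinter : (T ∪ commonNbrs G T).powerset ∩
      (univ.filter fun C : Finset V => G.IsClique (C : Set V) ∧ Disjoint C (commonNbrs G T)) =
      T.powerset := by
    ext C
    simp only [mem_inter, mem_powerset, mem_filter, mem_univ, true_and]
    constructor
    · rintro ⟨hsub, -, hdisj⟩
      exact hdisj.left_le_of_le_sup_right hsub
    · intro hCT
      exact ⟨hCT.trans subset_union_left, hT.1.subset (coe_subset.2 hCT),
        disjoint_commonNbrs.mono_left hCT⟩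
  rw [cliqueCount, hcliques, ← card_powerset T, ← hinter, card_union_add_card_inter,
    card_powerset, hT.card_union_commonNbrs]

lemma isIndepFinset_RT_subtype {C : Finset V} (hC : G.IsClique (C : Set V)) :
    IsIndepFinset (RT G T) (C.subtype (· ∈ (commonNbrs G T : Set V))) := by
  intro a ha b hb hab hadj
  exact (RT_adj.1 hadj).2 (hC (mem_subtype.1 ha) (mem_subtype.1 hb) (Subtype.coe_ne_coe.2 hab))

lemma IsTight.sdiff_commonNbrs_subset_or (hdeg : G.maxDegree ≤ r) (hT : IsTight r G T)
    {C : Finset V} (hC : G.IsClique (C : Set V)) {x : V} (hxC : x ∈ C)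
    (hxS : x ∈ commonNbrs G T) :
    C \ commonNbrs G T ⊆ T ∨
      C \ commonNbrs G T ⊆ G.neighborFinset x \ (T ∪ commonNbrs G T) := by
  refine or_iff_not_imp_left.2 fun hCT => ?_
  obtain ⟨y, hy, hyT⟩ := not_subset.1 hCT
  obtain ⟨hyC, hyS⟩ := mem_sdiff.1 hy
  have hyTS : y ∉ T ∪ commonNbrs G T := by simp [hyT, hyS]
  intro z hz
  obtain ⟨hzC, hzS⟩ := mem_sdiff.1 hz
  have hzT : z ∉ T := fun hzT =>
    hT.not_adj_of_notMem_union hdeg hzT hyTS (hC hzC hyC (by rintro rfl; exact hyT hzT))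
  refine mem_sdiff.2 ⟨(mem_neighborFinset _ _ _).2 (hC hxC hzC ?_), by simp [hzT, hzS]⟩
  rintro rfl
  exact hzS hxS

lemma IsTight.card_cliques_subtype_eq_le (hdeg : G.maxDegree ≤ r) (hT : IsTight r G T)
    {I : Finset ((commonNbrs G T : Finset V) : Set V)} {x : ((commonNbrs G T : Finset V) : Set V)}
    (hx : x ∈ I) :
    (univ.filter fun C : Finset V =>
        G.IsClique (C : Set V) ∧ C.subtype (· ∈ (commonNbrs G T : Set V)) = I).card ≤
      2 ^ T.card + (2 ^ (RT G T).degree x - 1) := by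
  set D := G.neighborFinset (x : V) \ (T ∪ commonNbrs G T)
  have hfiber : (univ.filter fun C : Finset V =>
        G.IsClique (C : Set V) ∧ C.subtype (· ∈ (commonNbrs G T : Set V)) = I).card ≤
      (T.powerset ∪ D.powerset).card := by
    refine card_le_card_of_injOn (· \ commonNbrs G T) (fun C hC => ?_) fun C hC C' hC' h => ?_
    · obtain ⟨hCcl, hCI⟩ := (mem_filter.1 hC).2
      have hxC : (x : V) ∈ C := mem_subtype.1 (hCI ▸ hx)
      simpa only [coe_union, Set.mem_union, mem_coe, mem_powerset] using
        hT.sdiff_commonNbrs_subset_or hdeg hCcl hxC x.2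
    · exact eq_of_subtype_eq_of_sdiff_eq
        ((mem_filter.1 hC).2.2.trans (mem_filter.1 hC').2.2.symm) h
  have hD : D.card ≤ (RT G T).degree x :=
    hT.card_neighborFinset_sdiff_le_degree_RT hdeg x.2
  have := card_powerset_union_powerset_add_one_le T D
  have := Nat.pow_le_pow_right two_pos hD
  have := Nat.one_le_two_pow (n := (RT G T).degree x)
  omega

lemma IsTight.card_cliques_not_disjoint_le (hdeg : G.maxDegree ≤ r) (hT : IsTight r G T) :
    (univ.filter fun C : Finset V =>
        G.IsClique (C : Set V) ∧ ¬ Disjoint C (commonNbrs G T)).card ≤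
      ∑ I ∈ univ.filter (fun I : Finset ((commonNbrs G T : Finset V) : Set V) =>
          I.Nonempty ∧ IsIndepFinset (RT G T) I),
        (2 ^ T.card + (2 ^ minDegOn (RT G T) I - 1)) := by
  have hmaps : ∀ C ∈ univ.filter (fun C : Finset V =>
        G.IsClique (C : Set V) ∧ ¬ Disjoint C (commonNbrs G T)),
      C.subtype (· ∈ (commonNbrs G T : Set V)) ∈
        univ.filter (fun I => I.Nonempty ∧ IsIndepFinset (RT G T) I) := by
    intro C hC
    obtain ⟨hCcl, hCS⟩ := (mem_filter.1 hC).2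
    obtain ⟨v, hvC, hvS⟩ := not_disjoint_iff.1 hCS
    exact mem_filter.2 ⟨mem_univ _, ⟨⟨v, hvS⟩, mem_subtype.2 hvC⟩, isIndepFinset_RT_subtype hCcl⟩
  rw [card_eq_sum_card_fiberwise hmaps]
  refine sum_le_sum fun I hI => ?_
  obtain ⟨x, hxI, hx⟩ := exists_mem_degree_eq_minDegOn (RT G T) (mem_filter.1 hI).2.1
  rw [← hx, filter_filter]
  exact (card_le_card (monotone_filter_right _ fun _ _ h => ⟨h.1.1, h.2⟩)).trans
    (hT.card_cliques_subtype_eq_le hdeg hxI)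

end Paper

/-- **Lemma 4.3.** If `G` has `Δ(G) ≤ r` and `T` is a tight clique of size `t`, then
`k(G_T) ≥ k(G) + 2^{r+1} - 2^t * i(R_T) - φ(R_T)` (as integers). -/
theorem stmt10 {V : Type*} [Fintype V] (r t : ℕ) (G : SimpleGraph V) (hdeg : G.maxDegree ≤ r)
    (T : Finset V) (hT : IsTight r G T) (ht : T.card = t) :
    (cliqueCount G : ℤ) + 2 ^ (r + 1) - 2 ^ t * indepCount (RT G T) - fixedLoss (RT G T) ≤
      (cliqueCount (modGraph G T) : ℤ) := by
  subst ht
  have hsplit := cliqueCount_eq_card_disjoint_add_card_not_disjoint G (commonNbrs G T)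
  have hmod := hT.cliqueCount_modGraph_add
  have hmeet := hT.card_cliques_not_disjoint_le hdeg
  rw [sum_add_distrib, sum_const, smul_eq_mul, ← fixedLoss] at hmeet
  rw [indepCount_eq_card_nonempty_add_one]
  push_cast
  linarith
end

section
/- If R is a simple graph on s vertices, then its fixed loss satisfies φ(R) ≤ s(2^{s−1} − 1). -/
open Classical Finset

open Paper

/-!
Charge each nonempty independent set `I` to its vertices:
`2 ^ δ_I - 1 ≤ ∑_{v ∈ I} (2 ^ d(v) - 1)`. An independent set containing `v` is `v` together
with a subset of the `s - 1 - d(v)` vertices other than `v` that are not adjacent to it, so `v`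
is charged at most
`(2 ^ d(v) - 1) 2 ^ (s - 1 - d(v)) = 2 ^ (s - 1) - 2 ^ (s - 1 - d(v)) ≤ 2 ^ (s - 1) - 1`.
-/

namespace Paper

lemma two_pow_sub_one_mul_two_pow_le (d m : ℕ) : (2 ^ d - 1) * 2 ^ m ≤ 2 ^ (d + m) - 1 := by
  rw [Nat.sub_mul, one_mul, pow_add]
  have := Nat.one_le_two_pow (n := m)
  omega

variable {W : Type*} [Fintype W] (R : SimpleGraph W)

lemma minDegOn_le_degree {I : Finset W} {v : W} (hv : v ∈ I) : minDegOn R I ≤ R.degree v :=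
  Nat.sInf_le ⟨v, hv, rfl⟩

lemma card_indepFinset_mem_le (v : W) :
    #{I | IsIndepFinset R I ∧ v ∈ I} ≤ 2 ^ (Fintype.card W - 1 - R.degree v) := by
  set S := univ \ insert v (R.neighborFinset v)
  have hsub :
      ({I | IsIndepFinset R I ∧ v ∈ I} : Finset (Finset W)) ⊆ S.powerset.image (insert v) := by
    intro I hI
    obtain ⟨hind, hv⟩ := (mem_filter.mp hI).2
    refine mem_image.mpr ⟨I.erase v, mem_powerset.mpr fun u hu => ?_, insert_erase hv⟩
    obtain ⟨huv, huI⟩ := mem_erase.mp hu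
    simpa [S, huv] using hind hv huI (Ne.symm huv)
  have hS : #S = Fintype.card W - 1 - R.degree v := by
    rw [card_univ_sdiff, card_insert_of_notMem (R.notMem_neighborFinset_self v),
      SimpleGraph.card_neighborFinset_eq_degree]
    omega
  calc #{I | IsIndepFinset R I ∧ v ∈ I} ≤ #(S.powerset.image (insert v)) := card_le_card hsub
    _ ≤ #S.powerset := card_image_le
    _ = 2 ^ (Fintype.card W - 1 - R.degree v) := by rw [card_powerset, hS]

noncomputable def charge (v : W) : ℕ :=
  (2 ^ R.degree v - 1) * #{I | IsIndepFinset R I ∧ v ∈ I}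

lemma charge_le (v : W) : charge R v ≤ 2 ^ (Fintype.card W - 1) - 1 := by
  have hdeg : R.degree v < Fintype.card W := R.degree_lt_card_verts v
  calc charge R v
      ≤ (2 ^ R.degree v - 1) * 2 ^ (Fintype.card W - 1 - R.degree v) :=
        Nat.mul_le_mul_left _ (card_indepFinset_mem_le R v)
    _ ≤ 2 ^ (R.degree v + (Fintype.card W - 1 - R.degree v)) - 1 :=
        two_pow_sub_one_mul_two_pow_le _ _
    _ = 2 ^ (Fintype.card W - 1) - 1 := by congr 2; omega

lemma fixedLoss_le_sum_charge : fixedLoss R ≤ ∑ v, charge R v := by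
  calc fixedLoss R
      ≤ ∑ I ∈ {I | I.Nonempty ∧ IsIndepFinset R I}, ∑ v ∈ I, (2 ^ R.degree v - 1) := by
        refine sum_le_sum fun I hI => ?_
        obtain ⟨v, hv⟩ := (mem_filter.mp hI).2.1
        calc 2 ^ minDegOn R I - 1 ≤ 2 ^ R.degree v - 1 :=
              Nat.sub_le_sub_right (Nat.pow_le_pow_right two_pos (minDegOn_le_degree R hv)) 1
          _ ≤ ∑ v ∈ I, (2 ^ R.degree v - 1) :=
              single_le_sum (f := fun v => 2 ^ R.degree v - 1) (fun _ _ => Nat.zero_le _) hv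
    _ = ∑ v, ∑ I ∈ {I | IsIndepFinset R I ∧ v ∈ I}, (2 ^ R.degree v - 1) :=
        sum_comm' fun I v => by
          simp only [mem_filter, mem_univ, true_and]
          exact ⟨fun ⟨⟨_, h⟩, hv⟩ => ⟨⟨h, hv⟩, trivial⟩, fun ⟨⟨h, hv⟩, _⟩ => ⟨⟨⟨v, hv⟩, h⟩, hv⟩⟩
    _ = ∑ v, charge R v := by
        simp only [charge, sum_const, smul_eq_mul, mul_comm]

end Paper

/-- **Theorem 4.5.** If `R` is a graph on `s` vertices, then `φ(R) ≤ φ(K_s) = s(2^{s-1} - 1)`. -/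
theorem stmt12 {W : Type*} [Fintype W] (s : ℕ) (hcard : Fintype.card W = s)
    (R : SimpleGraph W) :
    fixedLoss R ≤ s * (2 ^ (s - 1) - 1) := by
  subst hcard
  calc fixedLoss R ≤ ∑ v, charge R v := fixedLoss_le_sum_charge R
    _ ≤ ∑ _v : W, (2 ^ (Fintype.card W - 1) - 1) := sum_le_sum fun v _ => charge_le R v
    _ = Fintype.card W * (2 ^ (Fintype.card W - 1) - 1) := by
        rw [sum_const, card_univ, smul_eq_mul]
end
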